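/- arXiv:2204.06069 — 6 statements merged into one kernel-verified Lean document; each statement's English description precedes it below -/
import Mathlib

section
/- In the single-variable case: let i ≥ 0 be an integer. For every holomorphic function f on an open convex set X ⊆ C containing 0 and stable under z ↦ 0 (i.e., containing the segment [z,0] projected suitably), setting F(z) = z f(z), there exists a holomorphic differential operator D_i with polynomial coefficients (independent of f) such that f^{(i)}(z) = z^{-(i+1)}(D_i F)(z), and consequently sup_{z∈X} |f^{(i)}(z)| ≤ sup_{z∈X} |(d^{i+1}/dz^{i+1})(D_i F)(z)|, using that D_i F vanishes to order i+1 at z = 0 and the mean value estimate along the segment from z to its projection. -/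
open Topology Filter

/-- A holomorphic differential operator with polynomial coefficients in one variable,
represented as a finite list of pairs (polynomial coefficient, order of derivative). -/
noncomputable def applyPDO1 (D : List (Polynomial ℂ × ℕ)) (f : ℂ → ℂ) (z : ℂ) : ℂ :=
  (D.map (fun pr => Polynomial.eval z pr.1 * iteratedDeriv pr.2 f z)).sum

/-- coefficients of the operator `D_i` -/
noncomputable def cfPDO (i k : ℕ) : ℂ :=
  (-1) ^ (i - k) * (Nat.factorial (i - k)) * (i.choose k)

/-- the operator `D_i`: `(D_i F)(z) = ∑_{k ≤ i} c_{i,k} z^k F^{(k)}(z)` -/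
noncomputable def DlistPDO (i : ℕ) : List (Polynomial ℂ × ℕ) :=
  (List.range (i + 1)).map fun k => (Polynomial.C (cfPDO i k) * Polynomial.X ^ k, k)

private lemma list_sum_range {M : Type*} [AddCommMonoid M] (g : ℕ → M) (n : ℕ) :
    ((List.range n).map g).sum = ∑ k ∈ Finset.range n, g k := by
  induction n with
  | zero => simp
  | succ n ih => simp [List.range_succ, Finset.sum_range_succ, ih]

private lemma applyPDO1_Dlist (i : ℕ) (F : ℂ → ℂ) (z : ℂ) :
    applyPDO1 (DlistPDO i) F z
      = ∑ k ∈ Finset.range (i + 1), cfPDO i k * z ^ k * iteratedDeriv k F z := by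
  unfold applyPDO1 DlistPDO
  rw [List.map_map, list_sum_range]
  simp [Function.comp, mul_assoc]

private lemma cfPDO_self (i : ℕ) : cfPDO i i = 1 := by
  simp [cfPDO]

private lemma cfPDO_rec (i k : ℕ) (hk : k < i) :
    cfPDO i k + (k + 1 : ℂ) * cfPDO i (k + 1) = 0 := by
  obtain ⟨a, ha⟩ : ∃ a, i - k = a + 1 := ⟨i - k - 1, by omega⟩
  have hik : i - (k + 1) = a := by omega
  have hchoose : (i.choose (k + 1) * (k + 1) : ℂ) = i.choose k * ((a : ℂ) + 1) := by
    have := Nat.choose_succ_right_eq i k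
    have h2 : (i.choose (k+1) * (k+1) : ℕ) = i.choose k * (a + 1) := by rw [this, ← ha]
    exact_mod_cast h2
  simp only [cfPDO, ha, hik, pow_succ, Nat.factorial_succ]
  push_cast
  linear_combination ((-1 : ℂ) ^ a * (Nat.factorial a : ℂ)) * hchoose

private lemma telescope (i : ℕ) (z : ℂ) (a : ℕ → ℂ) :
    ∑ k ∈ Finset.range (i + 1), cfPDO i k * z ^ k * (z * a k + k * a (k - 1))
      = z ^ (i + 1) * a i := by
  have hsplit : ∀ k ∈ Finset.range (i + 1),
      cfPDO i k * z ^ k * (z * a k + k * a (k - 1))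
        = cfPDO i k * z ^ (k + 1) * a k + (k : ℂ) * cfPDO i k * z ^ k * a (k - 1) := by
    intro k _; ring
  rw [Finset.sum_congr rfl hsplit, Finset.sum_add_distrib]
  have h2 : ∑ k ∈ Finset.range (i + 1), (k : ℂ) * cfPDO i k * z ^ k * a (k - 1)
      = ∑ k ∈ Finset.range i, ((k : ℂ) + 1) * cfPDO i (k + 1) * z ^ (k + 1) * a k := by
    rw [Finset.sum_range_succ']
    push_cast
    simp
  have h1 : ∑ k ∈ Finset.range (i + 1), cfPDO i k * z ^ (k + 1) * a k
      = (∑ k ∈ Finset.range i, cfPDO i k * z ^ (k + 1) * a k) + z ^ (i + 1) * a i := by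
    rw [Finset.sum_range_succ, cfPDO_self, one_mul]
  rw [h1, h2]
  have h3 : (∑ k ∈ Finset.range i, cfPDO i k * z ^ (k + 1) * a k)
      + ∑ k ∈ Finset.range i, ((k : ℂ) + 1) * cfPDO i (k + 1) * z ^ (k + 1) * a k = 0 := by
    rw [← Finset.sum_add_distrib]
    refine Finset.sum_eq_zero fun k hk => ?_
    have := cfPDO_rec i k (Finset.mem_range.1 hk)
    have : cfPDO i k + ((k : ℂ) + 1) * cfPDO i (k + 1) = 0 := by push_cast at this ⊢; linear_combination this
    linear_combination (z ^ (k + 1) * a k) * this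
  linear_combination h3

private lemma iteratedDeriv_congr_of_isOpen {X : Set ℂ} (hX : IsOpen X) {g h : ℂ → ℂ}
    (hgh : ∀ x ∈ X, g x = h x) (n : ℕ) :
    ∀ z ∈ X, iteratedDeriv n g z = iteratedDeriv n h z := by
  induction n with
  | zero => simpa using hgh
  | succ n ih =>
    intro z hz
    rw [iteratedDeriv_succ, iteratedDeriv_succ]
    exact Filter.EventuallyEq.deriv_eq (Filter.eventuallyEq_of_mem (hX.mem_nhds hz) ih)

private lemma analytic_iter {X : Set ℂ} (hX : IsOpen X) {f : ℂ → ℂ}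
    (hf : DifferentiableOn ℂ f X) (k : ℕ) : AnalyticOnNhd ℂ (iteratedDeriv k f) X := by
  induction k with
  | zero => simpa [iteratedDeriv_zero] using hf.analyticOnNhd hX
  | succ k ih => rw [iteratedDeriv_succ]; exact ih.deriv

private lemma iter_mul_id {X : Set ℂ} (hX : IsOpen X) {f : ℂ → ℂ}
    (hf : DifferentiableOn ℂ f X) (k : ℕ) :
    ∀ z ∈ X, iteratedDeriv k (fun w => w * f w) z
      = z * iteratedDeriv k f z + (k : ℂ) * iteratedDeriv (k - 1) f z := by
  induction k with
  | zero => intro z hz; simp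
  | succ k ih =>
    intro z hz
    rw [iteratedDeriv_succ]
    have h1 : deriv (iteratedDeriv k (fun w => w * f w)) z
        = deriv (fun w => w * iteratedDeriv k f w + (k : ℂ) * iteratedDeriv (k - 1) f w) z :=
      Filter.EventuallyEq.deriv_eq (Filter.eventuallyEq_of_mem (hX.mem_nhds hz) ih)
    have hk : DifferentiableAt ℂ (iteratedDeriv k f) z :=
      ((analytic_iter hX hf k) z hz).differentiableAt
    have hk1 : DifferentiableAt ℂ (iteratedDeriv (k - 1) f) z :=
      ((analytic_iter hX hf (k - 1)) z hz).differentiableAt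
    rw [h1, deriv_fun_add ((differentiableAt_fun_id.fun_mul hk)) (hk1.const_mul _),
      deriv_fun_mul differentiableAt_fun_id hk, deriv_const_mul _ hk1]
    rw [← iteratedDeriv_succ]
    cases k with
    | zero => simp [deriv_id'']; ring
    | succ k =>
      simp only [Nat.succ_sub_one, ← iteratedDeriv_succ, deriv_id'']
      push_cast
      ring

private lemma key_identity {X : Set ℂ} (hX : IsOpen X) {f : ℂ → ℂ}
    (hf : DifferentiableOn ℂ f X) (i : ℕ) :
    ∀ z ∈ X, applyPDO1 (DlistPDO i) (fun w => w * f w) z = z ^ (i + 1) * iteratedDeriv i f z := by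
  intro z hz
  rw [applyPDO1_Dlist, ← telescope i z (fun k => iteratedDeriv k f z)]
  exact Finset.sum_congr rfl fun k _ => by rw [iter_mul_id hX hf k z hz]

private lemma norm_le_of_mem_segment {z x : ℂ} (hx : x ∈ segment ℝ 0 z) : ‖x‖ ≤ ‖z‖ := by
  obtain ⟨s, t, hs, ht, hst, rfl⟩ := hx
  rw [smul_zero, zero_add, norm_smul]
  have h1 : ‖t‖ ≤ 1 := by rw [Real.norm_eq_abs, abs_of_nonneg ht]; linarith
  nlinarith [norm_nonneg z]

private lemma pow_mul_bound {X : Set ℂ} (hX : IsOpen X) (h0 : (0 : ℂ) ∈ X)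
    (hseg : ∀ z ∈ X, segment ℝ 0 z ⊆ X) :
    ∀ m : ℕ, ∀ u : ℂ → ℂ, AnalyticOnNhd ℂ u X → ∀ C : ℝ,
      (∀ z ∈ X, ‖iteratedDeriv m (fun w => w ^ m * u w) z‖ ≤ C) →
      ∀ z ∈ X, ‖z ^ m * u z‖ ≤ C * ‖z‖ ^ m := by
  intro m
  induction m with
  | zero =>
    intro u hu C hC z hz
    simpa using hC z hz
  | succ m ih =>
    intro u hu C hC z hz
    set v : ℂ → ℂ := fun w => (m + 1 : ℂ) * u w + w * deriv u w with hv
    have hvA : AnalyticOnNhd ℂ v X := fun x hx =>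
      ((analyticAt_const.mul (hu x hx)).add (analyticAt_id.mul ((hu.deriv) x hx)))
    have hderiv : ∀ x ∈ X, deriv (fun w => w ^ (m + 1) * u w) x = x ^ m * v x := by
      intro x hx
      have hux : DifferentiableAt ℂ u x := (hu x hx).differentiableAt
      rw [deriv_fun_mul (differentiableAt_pow _) hux, deriv_pow_field]
      simp only [hv]
      push_cast
      ring
    have hC' : ∀ x ∈ X, ‖iteratedDeriv m (fun w => w ^ m * v w) x‖ ≤ C := by
      intro x hx
      rw [← iteratedDeriv_congr_of_isOpen hX hderiv m x hx, ← iteratedDeriv_succ']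
      exact hC x hx
    have hbound := ih v hvA C hC'
    have hsub : segment ℝ 0 z ⊆ X := hseg z hz
    have hdiff : ∀ x ∈ segment ℝ 0 z, DifferentiableAt ℂ (fun w => w ^ (m + 1) * u w) x :=
      fun x hx => (differentiableAt_pow _).mul ((hu x (hsub hx)).differentiableAt)
    have hb : ∀ x ∈ segment ℝ 0 z, ‖deriv (fun w => w ^ (m + 1) * u w) x‖ ≤ C * ‖z‖ ^ m := by
      intro x hx
      rw [hderiv x (hsub hx)]
      have h1 : ‖x ^ m * v x‖ ≤ C * ‖x‖ ^ m := hbound x (hsub hx)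
      have hCnn : 0 ≤ C := le_trans (norm_nonneg _) (hC 0 h0)
      have h2 : C * ‖x‖ ^ m ≤ C * ‖z‖ ^ m := by
        gcongr
        exact norm_le_of_mem_segment hx
      linarith
    have hmvt := Convex.norm_image_sub_le_of_norm_deriv_le hdiff hb (convex_segment _ _)
      (left_mem_segment ℝ (0 : ℂ) z) (right_mem_segment ℝ (0 : ℂ) z)
    simp only [zero_pow (Nat.succ_ne_zero m), zero_mul, sub_zero] at hmvt
    calc ‖z ^ (m + 1) * u z‖ ≤ C * ‖z‖ ^ m * ‖z‖ := hmvt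
      _ = C * ‖z‖ ^ (m + 1) := by ring

/-- Single-variable case: for every `i ≥ 0` there is a holomorphic differential operator `D_i`
with polynomial coefficients, independent of `f`, so that for every holomorphic `f` on an open
convex set `X ∋ 0` stable under the segments `[z,0]`, with `F(z) = z f(z)`, one has
`f^{(i)}(z) = z^{-(i+1)} (D_i F)(z)` on `X \ {0}`, and consequently
`sup_X |f^{(i)}| ≤ sup_X |(d^{i+1}/dz^{i+1})(D_i F)|`. -/
theorem stmt_3 (i : ℕ) :
    ∃ D : List (Polynomial ℂ × ℕ),
      ∀ (X : Set ℂ), IsOpen X → Convex ℝ X → (0 : ℂ) ∈ X →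
        (∀ z ∈ X, segment ℝ 0 z ⊆ X) →
      ∀ f : ℂ → ℂ, DifferentiableOn ℂ f X →
        (∀ z ∈ X, z ≠ 0 →
          iteratedDeriv i f z = z ^ (-(i + 1 : ℤ)) * applyPDO1 D (fun w => w * f w) z) ∧
        (∀ C : ℝ,
          (∀ z ∈ X, ‖iteratedDeriv (i + 1) (applyPDO1 D (fun w => w * f w)) z‖ ≤ C) →
          ∀ z ∈ X, ‖iteratedDeriv i f z‖ ≤ C) := by
  refine ⟨DlistPDO i, ?_⟩
  intro X hX hconv h0 hseg f hf
  have hkey := key_identity hX hf i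
  constructor
  · intro z hz hz0
    rw [hkey z hz]
    have : (-(i + 1 : ℤ)) = -((i + 1 : ℕ) : ℤ) := by push_cast; ring
    rw [this, zpow_neg, zpow_natCast]
    rw [inv_mul_cancel_left₀ (pow_ne_zero _ hz0)]
  · intro C hC
    have hu : AnalyticOnNhd ℂ (iteratedDeriv i f) X := analytic_iter hX hf i
    have hC' : ∀ z ∈ X,
        ‖iteratedDeriv (i + 1) (fun w => w ^ (i + 1) * iteratedDeriv i f w) z‖ ≤ C := by
      intro z hz
      rw [iteratedDeriv_congr_of_isOpen hX (fun x hx => (hkey x hx).symm) (i + 1) z hz]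
      exact hC z hz
    have hb := pow_mul_bound hX h0 hseg (i + 1) _ hu C hC'
    have hne : ∀ z ∈ X, z ≠ 0 → ‖iteratedDeriv i f z‖ ≤ C := by
      intro z hz hz0
      have h1 := hb z hz
      rw [norm_mul, norm_pow] at h1
      have h2 : (0 : ℝ) < ‖z‖ ^ (i + 1) := pow_pos (norm_pos_iff.2 hz0) _
      exact le_of_mul_le_mul_left (by linarith [h1]) h2
    intro z hz
    by_cases hz0 : z = 0
    · subst hz0
      have hcont : ContinuousAt (fun w => ‖iteratedDeriv i f w‖) 0 :=
        ((hu 0 h0).differentiableAt.continuousAt).norm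
      have hnb : (𝓝[≠] (0 : ℂ)).NeBot := Module.punctured_nhds_neBot ℝ ℂ 0
      have hmem : X \ {0} ∈ 𝓝[≠] (0 : ℂ) := by
        rw [Set.diff_eq]
        exact Filter.inter_mem (mem_nhdsWithin_of_mem_nhds (hX.mem_nhds h0)) self_mem_nhdsWithin
      have ht : Filter.Tendsto (fun w => ‖iteratedDeriv i f w‖) (𝓝[≠] (0 : ℂ))
          (𝓝 ‖iteratedDeriv i f 0‖) := hcont.continuousWithinAt.tendsto
      refine le_of_tendsto ht ?_
      filter_upwards [hmem] with w hw
      exact hne w hw.1 hw.2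
    · exact hne z hz hz0
end

section
/- Let W be the Weyl group of GL_n with its standard Levi subgroups. Let P, Q, R be standard parabolic subgroups with Q ⊆ R. Then: (1) for any w ∈ _RW_P (the set of minimal-length representatives of W^R\W/W^P) and any w₁ ∈ _QW^R_{R_w}, the product w₁w lies in _QW_P; (2) every w₂ ∈ _QW_P admits a unique decomposition w₂ = w₁w with w ∈ _RW_P and w₁ ∈ _QW^R_{R_w}; moreover w₂ ∈ W(P;Q) if and only if w₁ ∈ W^R(R_w;Q) and w ∈ W(P;R). -/
/- Weyl group combinatorics for GL_n, modelled by permutations of `Fin n` and monotone block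
functions `β : Fin n → ℕ` encoding standard parabolic subgroups (two indices are in the same
block of the Levi iff they have the same `β`-value). -/

/-- The relation "same block" of a standard Levi. -/
abbrev relB (n : ℕ) (β : Fin n → ℕ) (a b : Fin n) : Prop := β a = β b

/-- The set `_QW_P` of double-coset representatives: `w` maps positive roots of the Levi of `P`
to positive roots and `w⁻¹` maps positive roots of the Levi of `Q` to positive roots; here
stated for arbitrary "Levi relations" `rP`, `rQ`. -/
abbrev relW (n : ℕ) (rQ rP : Fin n → Fin n → Prop) (w : Equiv.Perm (Fin n)) : Prop :=
  (∀ a b : Fin n, a < b → rP a b → w a < w b) ∧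
  (∀ a b : Fin n, a < b → rQ a b → w⁻¹ a < w⁻¹ b)

/-- `w ∈ W^R`, the Weyl group of the Levi of `R` (i.e. `w` preserves each `R`-block). -/
abbrev inLevi (n : ℕ) (β : Fin n → ℕ) (w : Equiv.Perm (Fin n)) : Prop :=
  ∀ a, β (w a) = β a

/-- The Levi relation of the standard parabolic `R_w = (M_R ∩ wPw⁻¹)N_R` for `w ∈ _RW_P`. -/
abbrev relRw (n : ℕ) (βP βR : Fin n → ℕ) (w : Equiv.Perm (Fin n)) (a b : Fin n) : Prop :=
  βR a = βR b ∧ βP (w⁻¹ a) = βP (w⁻¹ b)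

theorem Equiv.Perm.apply_inv_self {α : Type*} (f : Equiv.Perm α) (x : α) : f (f⁻¹ x) = x :=
  f.apply_symm_apply x

theorem Equiv.Perm.inv_apply_self {α : Type*} (f : Equiv.Perm α) (x : α) : f⁻¹ (f x) = x :=
  f.symm_apply_apply x

lemma sort_master {n : ℕ} {α : Type*} [LinearOrder α] (k : Fin n → α) (a b : Fin n) :
    (Tuple.sort k)⁻¹ a < (Tuple.sort k)⁻¹ b ↔ k a < k b ∨ (k a = k b ∧ a < b) := by
  obtain ⟨hmono, hstab⟩ := (Tuple.eq_sort_iff (f := k) (σ := Tuple.sort k)).mp rfl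
  have key : ∀ x y : Fin n, (Tuple.sort k)⁻¹ x < (Tuple.sort k)⁻¹ y →
      k x < k y ∨ (k x = k y ∧ x < y) := by
    intro x y h
    have h1 : k (Tuple.sort k ((Tuple.sort k)⁻¹ x)) ≤ k (Tuple.sort k ((Tuple.sort k)⁻¹ y)) :=
      hmono h.le
    rw [Equiv.Perm.apply_inv_self, Equiv.Perm.apply_inv_self] at h1
    rcases h1.lt_or_eq with h2 | h2
    · exact Or.inl h2
    · refine Or.inr ⟨h2, ?_⟩
      have := hstab _ _ h (by rw [Equiv.Perm.apply_inv_self, Equiv.Perm.apply_inv_self]; exact h2)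
      rwa [Equiv.Perm.apply_inv_self, Equiv.Perm.apply_inv_self] at this
  constructor
  · exact key a b
  · intro h
    rcases lt_trichotomy ((Tuple.sort k)⁻¹ a) ((Tuple.sort k)⁻¹ b) with h' | h' | h'
    · exact h'
    · have hab : a = b := (Equiv.injective _) h'
      subst hab
      rcases h with h | ⟨_, h⟩ <;> exact absurd h (lt_irrefl _)
    · rcases key b a h' with h2 | ⟨h2, h3⟩
      · rcases h with h | ⟨he, _⟩
        · exact absurd h2 h.asymm
        · exact absurd h2 (he ▸ lt_irrefl _)
      · rcases h with h | ⟨_, h⟩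
        · exact absurd h (h2 ▸ lt_irrefl _)
        · exact absurd h h3.asymm

/-- Lemma on double cosets (lemma `lem:ww'`): for standard parabolics `P`, `Q ⊆ R`:
(1) if `w ∈ _RW_P` and `w₁ ∈ _QW^R_{R_w}` then `w₁w ∈ _QW_P`;
(2) every `w₂ ∈ _QW_P` decomposes uniquely as `w₂ = w₁w` with `w ∈ _RW_P`, `w₁ ∈ W^R`,
`w₁ ∈ _QW^R_{R_w}`; moreover (3) `w₂ ∈ W(P;Q)` iff `w₁ ∈ W^R(R_w;Q)` and `w ∈ W(P;R)`
(membership in `W(·;·)` being the extra Levi-inclusion condition). -/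
theorem stmt_4 (n : ℕ) (βP βQ βR : Fin n → ℕ)
    (hP : Monotone βP) (hQ : Monotone βQ) (hR : Monotone βR)
    (hQR : ∀ a b : Fin n, βQ a = βQ b → βR a = βR b) :
    (∀ w w₁ : Equiv.Perm (Fin n),
      relW n (relB n βR) (relB n βP) w → inLevi n βR w₁ →
      relW n (relB n βQ) (relRw n βP βR w) w₁ →
      relW n (relB n βQ) (relB n βP) (w₁ * w)) ∧
    (∀ w₂ : Equiv.Perm (Fin n), relW n (relB n βQ) (relB n βP) w₂ →
      ∃! pr : Equiv.Perm (Fin n) × Equiv.Perm (Fin n),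
        w₂ = pr.1 * pr.2 ∧ relW n (relB n βR) (relB n βP) pr.2 ∧
        inLevi n βR pr.1 ∧ relW n (relB n βQ) (relRw n βP βR pr.2) pr.1) ∧
    (∀ w w₁ : Equiv.Perm (Fin n),
      relW n (relB n βR) (relB n βP) w → inLevi n βR w₁ →
      relW n (relB n βQ) (relRw n βP βR w) w₁ →
      ((∀ a b : Fin n, βP a = βP b → βQ ((w₁ * w) a) = βQ ((w₁ * w) b)) ↔
        ((∀ a b : Fin n, relRw n βP βR w a b → βQ (w₁ a) = βQ (w₁ b)) ∧
          (∀ a b : Fin n, βP a = βP b → βR (w a) = βR (w b))))) := by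
  refine ⟨?_, ?_, ?_⟩
  · -- Part 1
    rintro w w₁ ⟨hw1, hw2⟩ hL ⟨h11, h12⟩
    constructor
    · intro a b hab hP'
      have hwab : w a < w b := hw1 a b hab hP'
      simp only [Equiv.Perm.mul_apply]
      by_cases hRw : βR (w a) = βR (w b)
      · exact h11 _ _ hwab ⟨hRw, by
          rw [Equiv.Perm.inv_apply_self, Equiv.Perm.inv_apply_self]; exact hP'⟩
      · have hlt : βR (w a) < βR (w b) := lt_of_le_of_ne (hR hwab.le) hRw
        by_contra hc
        push_neg at hc
        have h2 : βR (w₁ (w b)) ≤ βR (w₁ (w a)) := hR hc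
        rw [hL, hL] at h2
        exact absurd h2 (not_le.mpr hlt)
    · intro a b hab hQ'
      have hx : w₁⁻¹ a < w₁⁻¹ b := h12 a b hab hQ'
      have hRab : βR a = βR b := hQR a b hQ'
      have hy : βR (w₁⁻¹ a) = βR (w₁⁻¹ b) := by
        have ha := hL (w₁⁻¹ a); have hb := hL (w₁⁻¹ b)
        rw [Equiv.Perm.apply_inv_self] at ha hb
        rw [← ha, ← hb]; exact hRab
      have := hw2 _ _ hx hy
      simpa [mul_inv_rev, Equiv.Perm.mul_apply] using this
  · -- Part 2
    rintro w₂ ⟨h21, h22⟩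
    set k : Fin n → ℕ := fun a => βR (w₂ a) with hk_def
    set σ : Equiv.Perm (Fin n) := Tuple.sort k with hσ_def
    -- βR ∘ (w₂ ∘ σ) = βR
    have hmono_kσ : Monotone (k ∘ σ) := Tuple.monotone_sort k
    have hcomp : βR ∘ ⇑((w₂ * σ).trans (Equiv.refl _)) = βR ∘ ⇑(w₂ * σ) := rfl
    have h1 : βR ∘ ⇑(w₂ * σ) = βR ∘ ⇑(Tuple.sort βR) :=
      Tuple.comp_sort_eq_comp_iff_monotone.mpr (by
        have : βR ∘ ⇑(w₂ * σ) = k ∘ σ := by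
          funext i; simp [Equiv.Perm.mul_apply, hk_def]
        rw [this]; exact hmono_kσ)
    have h2 : βR ∘ ⇑(1 : Equiv.Perm (Fin n)) = βR ∘ ⇑(Tuple.sort βR) :=
      Tuple.comp_sort_eq_comp_iff_monotone.mpr (by simpa using hR)
    have hLevi : inLevi n βR (w₂ * σ) := by
      intro a
      have := congrFun (h1.trans h2.symm) a
      simpa using this
    -- k (σ a) = βR a
    have hkσ : ∀ a, k (σ a) = βR a := by
      intro a
      have := hLevi a
      simpa [Equiv.Perm.mul_apply, hk_def] using this
    have master : ∀ a b : Fin n, σ⁻¹ a < σ⁻¹ b ↔ k a < k b ∨ (k a = k b ∧ a < b) :=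
      fun a b => sort_master k a b
    -- relW βR βP σ⁻¹, second condition convenient form: σ increasing on βR-blocks
    have hσR : ∀ a b : Fin n, a < b → βR a = βR b → σ a < σ b := by
      intro a b hab hRab
      have h := (master (σ a) (σ b)).mp (by
        rw [Equiv.Perm.inv_apply_self, Equiv.Perm.inv_apply_self]; exact hab)
      rcases h with h | ⟨_, h⟩
      · rw [hkσ, hkσ] at h; exact absurd hRab h.ne
      · exact h
    have hrelW : relW n (relB n βR) (relB n βP) σ⁻¹ := by
      constructor
      · intro a b hab hP'
        have hwab : w₂ a < w₂ b := h21 a b hab hP'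
        have hkab : k a ≤ k b := hR hwab.le
        rcases hkab.lt_or_eq with h | h
        · exact (master a b).mpr (Or.inl h)
        · exact (master a b).mpr (Or.inr ⟨h, hab⟩)
      · intro a b hab hRab
        simpa using hσR a b hab hRab
    have hrelW1 : relW n (relB n βQ) (relRw n βP βR σ⁻¹) (w₂ * σ) := by
      constructor
      · rintro a b hab ⟨hRab, hPab⟩
        simp only [inv_inv] at hPab
        have hσab : σ a < σ b := hσR a b hab hRab
        have := h21 _ _ hσab hPab
        simpa [Equiv.Perm.mul_apply] using this
      · intro a b hab hQ'
        have hx : w₂⁻¹ a < w₂⁻¹ b := h22 a b hab hQ'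
        have hke : k (w₂⁻¹ a) = k (w₂⁻¹ b) := by
          simp only [hk_def, Equiv.Perm.apply_inv_self]
          exact hQR a b hQ'
        have := (master _ _).mpr (Or.inr ⟨hke, hx⟩)
        simpa [mul_inv_rev, Equiv.Perm.mul_apply] using this
    refine ⟨(w₂ * σ, σ⁻¹), ⟨by group, hrelW, hLevi, hrelW1⟩, ?_⟩
    rintro ⟨u₁, u⟩ ⟨heq, ⟨hu1, hu2⟩, huL, hu3⟩
    -- show u⁻¹ = sort k
    have hkinv : ∀ i, k (u⁻¹ i) = βR i := by
      intro i
      have h3 : k (u⁻¹ i) = βR (u₁ (u (u⁻¹ i))) := by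
        simp only [hk_def, heq, Equiv.Perm.mul_apply]
      rw [Equiv.Perm.apply_inv_self] at h3
      rw [h3, huL]
    have husort : u⁻¹ = Tuple.sort k := by
      rw [Tuple.eq_sort_iff]
      constructor
      · intro i j hij
        simp only [Function.comp_apply, hkinv]
        exact hR hij
      · intro i j hij hke
        rw [hkinv, hkinv] at hke
        exact hu2 i j hij hke
    have hu_eq : u = σ⁻¹ := by rw [hσ_def, ← husort, inv_inv]
    have hu1_eq : u₁ = w₂ * σ := by
      have : u₁ = w₂ * u⁻¹ := by rw [heq]; group
      rw [this, husort, hσ_def]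
    simp only [Prod.mk.injEq]
    exact ⟨hu1_eq, hu_eq⟩
  · -- Part 3
    rintro w w₁ ⟨hw1, hw2⟩ hL ⟨h11, h12⟩
    constructor
    · intro h
      constructor
      · rintro a b ⟨_, hPab⟩
        have := h (w⁻¹ a) (w⁻¹ b) hPab
        simpa [Equiv.Perm.mul_apply, Equiv.Perm.apply_inv_self] using this
      · intro a b hP'
        have h1 : βQ (w₁ (w a)) = βQ (w₁ (w b)) := by
          simpa [Equiv.Perm.mul_apply] using h a b hP'
        have h2 : βR (w₁ (w a)) = βR (w₁ (w b)) := hQR _ _ h1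
        rwa [hL, hL] at h2
    · rintro ⟨h1, h2⟩ a b hP'
      simp only [Equiv.Perm.mul_apply]
      exact h1 (w a) (w b) ⟨h2 a b hP', by
        rw [Equiv.Perm.inv_apply_self, Equiv.Perm.inv_apply_self]; exact hP'⟩
end

section
/- Let G = GL_n, and identify a₀ with R^n with the standard inner product. Let M = G_{n₁}×…×G_{n_k} be a standard Levi subgroup, let P be the corresponding standard parabolic, and let P_π ⊆ P be a standard parabolic determined by divisors r_j | n_j. Let Q ⊆ R be standard parabolic subgroups and w ∈ _QW_P with P_π ⊆ P_w. For each coroot γ^∨ ∈ Δ_R^∨ with w⁻¹γ^∨ ∈ a₀^P (equivalently γ^∨ ∈ wa₀^P), one has ⟨w ν_{P_w}^P, γ^∨⟩ < 0, where ν_{P_w}^P is the vector whose component on a_{S_j}^{G_{n_j},*} equals −ρ_{S_j}^{G_{n_j}}/r_j (with P_w ∩ M = S₁×…×S_k). -/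
open Finset

set_option maxHeartbeats 1600000

/-- The coroot `γ^∨ ∈ Δ_R^∨` attached to the adjacent blocks `i`, `i+1` of the standard
parabolic `R` (block function `βR`): entries `1/m_i` on block `i`, `-1/m_{i+1}` on block
`i+1`, `0` elsewhere. -/
noncomputable def gammaV (n : ℕ) (βR : Fin n → ℕ) (i : ℕ) : Fin n → ℝ := fun b =>
  if βR b = i then ((univ.filter fun x : Fin n => βR x = i).card : ℝ)⁻¹
  else if βR b = i + 1 then -(((univ.filter fun x : Fin n => βR x = i + 1).card : ℝ)⁻¹)
  else 0

/-- The vector `ν_{P_w}^P`: on the `P`-block of `a` (value `βP a = j`), whose partition into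
sub-blocks is given by the fibers of `βQ ∘ w` (the parabolic `P_w`), its value at `a` is
`-ρ_{S_j}^{G_{n_j}}(a)/r_j = -(#later - #earlier)/(2 r_j)` where `#later` (resp. `#earlier`)
counts the coordinates of the `P`-block of `a` lying in later (resp. earlier) sub-blocks. -/
noncomputable def nuV (n : ℕ) (βP βQ : Fin n → ℕ) (w : Equiv.Perm (Fin n)) (r : ℕ → ℕ) :
    Fin n → ℝ := fun a =>
  -(((((univ.filter fun b : Fin n => βP b = βP a ∧ βQ (w a) < βQ (w b)).card : ℝ)) -
      (((univ.filter fun b : Fin n => βP b = βP a ∧ βQ (w b) < βQ (w a)).card : ℝ))) /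
    (2 * (r (βP a) : ℝ)))

noncomputable def blkN (n : ℕ) (βP βR : Fin n → ℕ) (w : Equiv.Perm (Fin n)) (i j : ℕ) : ℝ :=
  ∑ a ∈ univ.filter (fun a : Fin n => βP a = j), (if βR (w a) = i then (1:ℝ) else 0)

theorem block_eval (n : ℕ) (βP βQ βR : Fin n → ℕ)
    (hmQ : Monotone βQ) (hmR : Monotone βR)
    (hQR : ∀ a b : Fin n, βQ a = βQ b → βR a = βR b)
    (w : Equiv.Perm (Fin n)) (r : ℕ → ℕ) (i j : ℕ)
    (hγj : ∑ a ∈ univ.filter (fun a : Fin n => βP a = j), gammaV n βR i (w a) = 0) :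
    ∑ a ∈ univ.filter (fun a : Fin n => βP a = j), nuV n βP βQ w r a * gammaV n βR i (w a)
      = -((((univ.filter fun x : Fin n => βR x = i).card : ℝ)⁻¹ * blkN n βP βR w i j
          * (blkN n βP βR w i j + blkN n βP βR w (i + 1) j)) / (2 * (r j : ℝ))) := by
  classical
  simp only [blkN]
  set A : ℝ := ((univ.filter fun x : Fin n => βR x = i).card : ℝ)⁻¹ with hAdef
  set B : ℝ := ((univ.filter fun x : Fin n => βR x = i + 1).card : ℝ)⁻¹ with hBdef
  set s : Finset (Fin n) := univ.filter (fun a : Fin n => βP a = j) with hsdef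
  have hgamma : ∀ y : Fin n, gammaV n βR i y
      = (if βR y = i then A else if βR y = i + 1 then -B else 0) := by
    intro y; rw [hAdef, hBdef]; rfl
  have ordQR : ∀ x y : Fin n, βQ x < βQ y → βR x ≤ βR y := by
    intro x y hxy
    rcases le_or_gt x y with h | h
    · exact hmR h
    · exact absurd (hmQ h.le) (by omega)
  have ordRQ : ∀ x y : Fin n, βR x < βR y → βQ x < βQ y := by
    intro x y hxy
    rcases lt_trichotomy (βQ x) (βQ y) with h | h | h
    · exact h
    · exact absurd (hQR x y h) (by omega)
    · exact absurd (ordQR y x h) (by omega)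
  have hL : ∀ a : Fin n, (∑ b ∈ s, (if βQ (w a) < βQ (w b) then (1:ℝ) else 0))
      = ((univ.filter fun b : Fin n => βP b = j ∧ βQ (w a) < βQ (w b)).card : ℝ) := by
    intro a
    rw [Finset.sum_boole, hsdef, Finset.filter_filter]
  have hE : ∀ a : Fin n, (∑ b ∈ s, (if βQ (w b) < βQ (w a) then (1:ℝ) else 0))
      = ((univ.filter fun b : Fin n => βP b = j ∧ βQ (w b) < βQ (w a)).card : ℝ) := by
    intro a
    rw [Finset.sum_boole, hsdef, Finset.filter_filter]
  have h1 : ∀ a ∈ s, nuV n βP βQ w r a * gammaV n βR i (w a)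
      = (∑ b ∈ s, ((if βQ (w b) < βQ (w a) then (1:ℝ) else 0)
          - (if βQ (w a) < βQ (w b) then (1:ℝ) else 0))
          * (if βR (w a) = i then A else if βR (w a) = i + 1 then -B else 0))
        / (2 * (r j : ℝ)) := by
    intro a ha
    have hPa : βP a = j := by
      have := Finset.mem_filter.1 (hsdef ▸ ha)
      exact this.2
    rw [hgamma]
    simp only [nuV]
    rw [hPa, ← Finset.sum_mul, Finset.sum_sub_distrib, hL a, hE a]
    ring
  rw [Finset.sum_congr rfl h1, ← Finset.sum_div, ← neg_div]
  congr 1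
  have hswap : (∑ a ∈ s, ∑ b ∈ s, (if βQ (w a) < βQ (w b) then (1:ℝ) else 0)
        * (if βR (w a) = i then A else if βR (w a) = i + 1 then -B else 0))
      = ∑ a ∈ s, ∑ b ∈ s, (if βQ (w b) < βQ (w a) then (1:ℝ) else 0)
        * (if βR (w b) = i then A else if βR (w b) = i + 1 then -B else 0) :=
    Finset.sum_comm
  simp only [sub_mul, Finset.sum_sub_distrib]
  rw [hswap]
  simp only [← Finset.sum_sub_distrib]
  simp only [← mul_sub]
  simp only [ite_mul, one_mul, zero_mul]
  have h3 : ∀ a b : Fin n,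
      (if βQ (w b) < βQ (w a)
        then (if βR (w a) = i then A else if βR (w a) = i + 1 then -B else 0)
           - (if βR (w b) = i then A else if βR (w b) = i + 1 then -B else 0)
        else 0)
      = (if βR (w b) < βR (w a)
        then (if βR (w a) = i then A else if βR (w a) = i + 1 then -B else 0)
           - (if βR (w b) = i then A else if βR (w b) = i + 1 then -B else 0)
        else 0) := by
    intro a b
    rcases lt_trichotomy (βR (w b)) (βR (w a)) with hlt | heq | hgt
    · rw [if_pos hlt, if_pos (ordRQ _ _ hlt)]
    · rw [heq]; simp
    · rw [if_neg (by omega : ¬ βR (w b) < βR (w a)),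
          if_neg (fun hc => absurd (ordQR _ _ hc) (by omega))]
  simp only [h3]
  have h4 : ∀ u v : ℕ,
      (if v < u then (if u = i then A else if u = i + 1 then -B else 0)
          - (if v = i then A else if v = i + 1 then -B else 0) else 0)
      = A * ((if u = i then (1:ℝ) else 0) * (if v < i then (1:ℝ) else 0))
        - B * ((if u = i + 1 then (1:ℝ) else 0) * (if v < i + 1 then (1:ℝ) else 0))
        - A * ((if i < u then (1:ℝ) else 0) * (if v = i then (1:ℝ) else 0))
        + B * ((if i + 1 < u then (1:ℝ) else 0) * (if v = i + 1 then (1:ℝ) else 0)) := by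
    intro u v
    split_ifs <;> first | (exfalso; omega) | norm_num | ring
  simp only [h4]
  simp only [Finset.sum_add_distrib, Finset.sum_sub_distrib]
  have prod : ∀ (C : ℝ) (X Y : Fin n → ℝ),
      (∑ a ∈ s, ∑ b ∈ s, C * (X a * Y b)) = C * ((∑ a ∈ s, X a) * (∑ a ∈ s, Y a)) := by
    intro C X Y
    rw [Finset.sum_mul_sum, Finset.mul_sum]
    refine Finset.sum_congr rfl fun a _ => ?_
    rw [Finset.mul_sum]
  have e1 : (∑ a ∈ s, ∑ b ∈ s, A * ((if βR (w a) = i then (1:ℝ) else 0)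
        * (if βR (w b) < i then (1:ℝ) else 0)))
      = A * ((∑ a ∈ s, if βR (w a) = i then (1:ℝ) else 0)
        * (∑ a ∈ s, if βR (w a) < i then (1:ℝ) else 0)) := prod _ _ _
  have e2 : (∑ a ∈ s, ∑ b ∈ s, B * ((if βR (w a) = i + 1 then (1:ℝ) else 0)
        * (if βR (w b) < i + 1 then (1:ℝ) else 0)))
      = B * ((∑ a ∈ s, if βR (w a) = i + 1 then (1:ℝ) else 0)
        * (∑ a ∈ s, if βR (w a) < i + 1 then (1:ℝ) else 0)) := prod _ _ _
  have e3 : (∑ a ∈ s, ∑ b ∈ s, A * ((if i < βR (w a) then (1:ℝ) else 0)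
        * (if βR (w b) = i then (1:ℝ) else 0)))
      = A * ((∑ a ∈ s, if i < βR (w a) then (1:ℝ) else 0)
        * (∑ a ∈ s, if βR (w a) = i then (1:ℝ) else 0)) := prod _ _ _
  have e4 : (∑ a ∈ s, ∑ b ∈ s, B * ((if i + 1 < βR (w a) then (1:ℝ) else 0)
        * (if βR (w b) = i + 1 then (1:ℝ) else 0)))
      = B * ((∑ a ∈ s, if i + 1 < βR (w a) then (1:ℝ) else 0)
        * (∑ a ∈ s, if βR (w a) = i + 1 then (1:ℝ) else 0)) := prod _ _ _
  rw [e1, e2, e3, e4]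
  have hM2 : (∑ a ∈ s, if βR (w a) < i + 1 then (1:ℝ) else 0)
      = (∑ a ∈ s, if βR (w a) < i then (1:ℝ) else 0)
        + (∑ a ∈ s, if βR (w a) = i then (1:ℝ) else 0) := by
    rw [← Finset.sum_add_distrib]
    refine Finset.sum_congr rfl fun a _ => ?_
    split_ifs <;> first | (exfalso; omega) | norm_num | ring
  have hM3 : (∑ a ∈ s, if i < βR (w a) then (1:ℝ) else 0)
      = (∑ a ∈ s, if i + 1 < βR (w a) then (1:ℝ) else 0)
        + (∑ a ∈ s, if βR (w a) = i + 1 then (1:ℝ) else 0) := by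
    rw [← Finset.sum_add_distrib]
    refine Finset.sum_congr rfl fun a _ => ?_
    split_ifs <;> first | (exfalso; omega) | norm_num | ring
  have hcon : A * (∑ a ∈ s, if βR (w a) = i then (1:ℝ) else 0)
      - B * (∑ a ∈ s, if βR (w a) = i + 1 then (1:ℝ) else 0) = 0 := by
    have h := hγj
    simp only [hgamma] at h
    have hpt : ∀ u : ℕ, (if u = i then A else if u = i + 1 then -B else 0)
        = A * (if u = i then (1:ℝ) else 0) - B * (if u = i + 1 then (1:ℝ) else 0) := by
      intro u; split_ifs <;> first | (exfalso; omega) | norm_num | ring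
    simp only [hpt] at h
    rw [Finset.sum_sub_distrib, ← Finset.mul_sum, ← Finset.mul_sum] at h
    exact h
  rw [hM2, hM3]
  linear_combination ((∑ a ∈ s, if βR (w a) < i then (1:ℝ) else 0)
      - (∑ a ∈ s, if i + 1 < βR (w a) then (1:ℝ) else 0)
      + (∑ a ∈ s, if βR (w a) = i then (1:ℝ) else 0)) * hcon


/-- Negativity lemma (lemma `lem:negativity`): for standard parabolics `Q ⊆ R` of `GL_n`,
`w ∈ _QW_P` with `P_π ⊆ P_w` (the divisibility/alignment hypothesis `hπ` for the divisors
`r_j | n_j` of the discrete datum), and a coroot `γ^∨ ∈ Δ_R^∨` with `w⁻¹γ^∨ ∈ a₀^P`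
(hypothesis `hγ`: the sum of `γ^∨ ∘ w` over each `P`-block vanishes), one has
`⟨w ν_{P_w}^P, γ^∨⟩ < 0`. -/
theorem stmt_5 (n : ℕ) (βP βQ βR : Fin n → ℕ)
    (hmP : Monotone βP) (hmQ : Monotone βQ) (hmR : Monotone βR)
    (hQR : ∀ a b : Fin n, βQ a = βQ b → βR a = βR b)
    (w : Equiv.Perm (Fin n)) (hw : relW n (relB n βQ) (relB n βP) w)
    (r : ℕ → ℕ) (hr : ∀ j, 0 < r j)
    (hπ : ∀ j l : ℕ, r j ∣ (univ.filter fun a : Fin n => βP a = j ∧ βQ (w a) ≤ l).card)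
    (i : ℕ) (hi : ∃ a, βR a = i) (hi1 : ∃ a, βR a = i + 1)
    (hγ : ∀ j : ℕ, ∑ a ∈ univ.filter (fun a : Fin n => βP a = j), gammaV n βR i (w a) = 0) :
    ∑ a, nuV n βP βQ w r a * gammaV n βR i (w a) < 0 := by
  classical
  have hfib := Finset.sum_fiberwise_of_maps_to
      (fun (a : Fin n) (_ : a ∈ univ) => Finset.mem_image_of_mem βP (Finset.mem_univ a))
      (fun a => nuV n βP βQ w r a * gammaV n βR i (w a))
  rw [← hfib]
  have hb : ∀ i' j, 0 ≤ blkN n βP βR w i' j := fun i' j =>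
    Finset.sum_nonneg fun a _ => by positivity
  obtain ⟨x₀, hx₀⟩ := hi
  have hA : (0:ℝ) < ((univ.filter fun x : Fin n => βR x = i).card : ℝ)⁻¹ := by
    have h : 0 < (univ.filter fun x : Fin n => βR x = i).card :=
      Finset.card_pos.2 ⟨x₀, Finset.mem_filter.2 ⟨Finset.mem_univ _, hx₀⟩⟩
    exact inv_pos.2 (by exact_mod_cast h)
  have hkey : ∀ j, ∑ a ∈ univ.filter (fun a : Fin n => βP a = j),
        nuV n βP βQ w r a * gammaV n βR i (w a)
      = -((((univ.filter fun x : Fin n => βR x = i).card : ℝ)⁻¹ * blkN n βP βR w i j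
          * (blkN n βP βR w i j + blkN n βP βR w (i + 1) j)) / (2 * (r j : ℝ))) :=
    fun j => block_eval n βP βQ βR hmQ hmR hQR w r i j (hγ j)
  have hden : ∀ j : ℕ, (0:ℝ) < 2 * (r j : ℝ) := by
    intro j
    have : (0:ℝ) < (r j : ℝ) := by exact_mod_cast hr j
    linarith
  have hle : ∀ j ∈ univ.image βP,
      (∑ a ∈ univ.filter (fun a : Fin n => βP a = j),
        nuV n βP βQ w r a * gammaV n βR i (w a)) ≤ (fun _ : ℕ => (0:ℝ)) j := by
    intro j _
    rw [hkey j]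
    have hnum : 0 ≤ ((univ.filter fun x : Fin n => βR x = i).card : ℝ)⁻¹ * blkN n βP βR w i j
        * (blkN n βP βR w i j + blkN n βP βR w (i + 1) j) :=
      mul_nonneg (mul_nonneg hA.le (hb i j)) (add_nonneg (hb i j) (hb (i+1) j))
    exact neg_nonpos.2 (div_nonneg hnum (hden j).le)
  have hone : (1:ℝ) ≤ blkN n βP βR w i (βP (w⁻¹ x₀)) := by
    have hmem : w⁻¹ x₀ ∈ univ.filter (fun a : Fin n => βP a = βP (w⁻¹ x₀)) :=
      Finset.mem_filter.2 ⟨Finset.mem_univ _, rfl⟩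
    have h := Finset.single_le_sum (f := fun a : Fin n => if βR (w a) = i then (1:ℝ) else 0)
      (fun a _ => by positivity) hmem
    simpa [blkN, Equiv.Perm.coe_inv, hx₀] using h
  have hex : ∃ j ∈ univ.image βP,
      (∑ a ∈ univ.filter (fun a : Fin n => βP a = j),
        nuV n βP βQ w r a * gammaV n βR i (w a)) < (fun _ : ℕ => (0:ℝ)) j := by
    refine ⟨βP (w⁻¹ x₀), Finset.mem_image_of_mem _ (Finset.mem_univ _), ?_⟩
    rw [hkey _]
    have h2 : (0:ℝ) < blkN n βP βR w i (βP (w⁻¹ x₀)) := lt_of_lt_of_le one_pos hone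
    have hnum : (0:ℝ) < ((univ.filter fun x : Fin n => βR x = i).card : ℝ)⁻¹
        * blkN n βP βR w i (βP (w⁻¹ x₀))
        * (blkN n βP βR w i (βP (w⁻¹ x₀)) + blkN n βP βR w (i + 1) (βP (w⁻¹ x₀))) :=
      mul_pos (mul_pos hA h2) (lt_of_lt_of_le h2 (le_add_of_nonneg_right (hb (i+1) _)))
    exact neg_lt_zero.2 (div_pos hnum (hden _))
  exact (Finset.sum_lt_sum hle hex).trans_le (le_of_eq Finset.sum_const_zero)
end

section
/- Let G = GL_n, M a standard Levi subgroup, and ξ ∈ W₂(M) an involution (ξ² = 1, ξMξ⁻¹ = M). Then a_M decomposes as the orthogonal direct sum a_M^ξ ⊕ a_M^{−ξ} of the (+1)- and (−1)-eigenspaces of ξ, and there exists a unique Levi subgroup L ∈ L(M) containing M such that a_M^L = a_M^{−ξ} (equivalently a_L = a_M^ξ). The resulting map ξ ↦ L_ξ from W₂(M) to L(M) is injective. -/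
open Finset

open Classical in
lemma key_setoid {k : ℕ} (s : Fin k → ℕ) (hs : ∀ i, 0 < s i) (t : Setoid (Fin k))
    (a b : Fin k) (hab : a ≠ b) :
    (∀ j, ∑ i ∈ univ.filter (fun i => t.r i j), (s i : ℝ) *
        ((if i = a then ((s a : ℝ))⁻¹ else 0) - (if i = b then ((s b : ℝ))⁻¹ else 0)) = 0)
      ↔ t.r a b := by
  have hsa : (s a : ℝ) ≠ 0 := Nat.cast_ne_zero.mpr (hs a).ne'
  have hsb : (s b : ℝ) ≠ 0 := Nat.cast_ne_zero.mpr (hs b).ne'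
  have hsum : ∀ j, ∑ i ∈ univ.filter (fun i => t.r i j), (s i : ℝ) *
        ((if i = a then ((s a : ℝ))⁻¹ else 0) - (if i = b then ((s b : ℝ))⁻¹ else 0)) =
      (if t.r a j then (1:ℝ) else 0) - (if t.r b j then (1:ℝ) else 0) := by
    intro j
    rw [Finset.sum_filter]
    have hpt : ∀ i, (if t.r i j then (s i : ℝ) *
        ((if i = a then ((s a : ℝ))⁻¹ else 0) - (if i = b then ((s b : ℝ))⁻¹ else 0)) else 0) =
        (if i = a then (if t.r i j then (1:ℝ) else 0) else 0) -
        (if i = b then (if t.r i j then (1:ℝ) else 0) else 0) := by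
      intro i
      by_cases h1 : i = a <;> by_cases h2 : i = b
      · exact absurd (h1 ▸ h2) hab
      · subst h1; by_cases h3 : t.r i j <;> simp [h2, h3] <;> field_simp
      · subst h2; by_cases h3 : t.r i j <;> simp [h1, h3] <;> field_simp
      · by_cases h3 : t.r i j <;> simp [h1, h2, h3]
    rw [Finset.sum_congr rfl (fun i _ => hpt i), Finset.sum_sub_distrib,
      Finset.sum_ite_eq' univ a, Finset.sum_ite_eq' univ b]
    simp
  constructor
  · intro h
    have hb := h b
    rw [hsum b] at hb
    have hbb : t.r b b := t.refl' b
    by_cases hajb : t.r a b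
    · exact hajb
    · simp [hajb, hbb] at hb
  · intro hab' j
    rw [hsum j]
    have : t.r a j ↔ t.r b j := ⟨fun h => t.trans' (t.symm' hab') h, fun h => t.trans' hab' h⟩
    by_cases h : t.r a j
    · simp [h, this.mp h]
    · have hb : ¬ t.r b j := fun hb => h (this.mpr hb)
      simp [h, hb]

/- Involutions in `W(M)` and the Levi subgroups `L_ξ`, in the `GL_n` model: `M` is the standard
Levi with `k` blocks of sizes `s i ≥ 1`; `W(M)` is modelled by permutations `σ` of the blocks
preserving the sizes, acting on `a_M ≅ ℝ^k`, which carries the (weighted) inner product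
`⟨H,H'⟩ = ∑ s_i H_i H'_i`.  For an involution `ξ = σ`: (1) `a_M` decomposes as the orthogonal
direct sum of the `(±1)`-eigenspaces of `ξ`; (2) there is a unique Levi `L ⊇ M` — modelled by a
partition (`Setoid`) of the blocks, with `a_M^L = {H : weighted sums over each part vanish}` —
such that `a_M^L` equals the `(-1)`-eigenspace; (3) the map `ξ ↦ L_ξ` is injective. -/
open Classical in
theorem stmt_9 (k : ℕ) (s : Fin k → ℕ) (hs : ∀ i, 0 < s i)
    (σ : Equiv.Perm (Fin k)) (hinv : σ * σ = 1) (hsz : ∀ i, s (σ i) = s i) :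
    ((∀ H H' : Fin k → ℝ, (∀ i, H (σ i) = H i) → (∀ i, H' (σ i) = -H' i) →
        ∑ i, (s i : ℝ) * H i * H' i = 0) ∧
      (∀ H : Fin k → ℝ, ∃! p : (Fin k → ℝ) × (Fin k → ℝ),
        (∀ i, p.1 (σ i) = p.1 i) ∧ (∀ i, p.2 (σ i) = -p.2 i) ∧ H = p.1 + p.2)) ∧
    (∃! r : Setoid (Fin k),
      {H : Fin k → ℝ | ∀ j, ∑ i ∈ univ.filter (fun i => r.r i j), (s i : ℝ) * H i = 0} =
        {H : Fin k → ℝ | ∀ i, H (σ i) = -H i}) ∧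
    (∀ σ' : Equiv.Perm (Fin k), σ' * σ' = 1 → (∀ i, s (σ' i) = s i) →
      {H : Fin k → ℝ | ∀ i, H (σ' i) = -H i} = {H : Fin k → ℝ | ∀ i, H (σ i) = -H i} →
      σ' = σ) := by
  have hσσ : ∀ i, σ (σ i) = i := by
    intro i
    have := congrArg (fun τ : Equiv.Perm (Fin k) => τ i) hinv
    simpa [Equiv.Perm.mul_apply] using this
  refine ⟨⟨?orth, ?dec⟩, ?lev, ?inj⟩
  case orth =>
    intro H H' hH hH'
    have hre : ∑ i, (s i : ℝ) * H i * H' i = ∑ i, (s (σ i) : ℝ) * H (σ i) * H' (σ i) :=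
      (Equiv.sum_comp σ fun i => (s i : ℝ) * H i * H' i).symm
    have : ∑ i, (s i : ℝ) * H i * H' i = - ∑ i, (s i : ℝ) * H i * H' i := by
      nth_rewrite 1 [hre]
      rw [← Finset.sum_neg_distrib]
      refine Finset.sum_congr rfl fun i _ => ?_
      rw [hsz i, hH i, hH' i]; ring
    linarith
  case dec =>
    intro H
    refine ⟨⟨fun i => (H i + H (σ i)) / 2, fun i => (H i - H (σ i)) / 2⟩, ⟨?_, ?_, ?_⟩, ?_⟩
    · intro i; simp only [hσσ i]; ring
    · intro i; simp only [hσσ i]; ring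
    · funext i; simp; ring
    · rintro ⟨q1, q2⟩ ⟨h1, h2, h3⟩
      simp only at h1 h2 h3
      have hq : ∀ i, H i = q1 i + q2 i := fun i => congrFun h3 i
      have hq' : ∀ i, H (σ i) = q1 i - q2 i := by
        intro i
        have := hq (σ i)
        rw [h1 i, h2 i] at this
        linarith
      refine Prod.ext ?_ ?_ <;> funext i <;> simp
      · have := hq i; have := hq' i; linarith
      · have := hq i; have := hq' i; linarith
  case lev =>
    -- the setoid whose classes are the σ-orbits
    have hsymm : ∀ i j : Fin k, (i = j ∨ i = σ j) → (j = i ∨ j = σ i) := by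
      rintro i j (rfl | rfl)
      · exact Or.inl rfl
      · exact Or.inr (hσσ j).symm
    have htrans : ∀ i j m : Fin k, (i = j ∨ i = σ j) → (j = m ∨ j = σ m) →
        (i = m ∨ i = σ m) := by
      rintro i j m (rfl | rfl) (rfl | rfl)
      · exact Or.inl rfl
      · exact Or.inr rfl
      · exact Or.inr rfl
      · exact Or.inl (hσσ m)
    set r : Setoid (Fin k) :=
      ⟨fun i j => i = j ∨ i = σ j,
        ⟨fun i => Or.inl rfl, fun {i j} h => hsymm i j h, fun {i j m} h h' => htrans i j m h h'⟩⟩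
      with hrdef
    -- the weighted-sum description of a_M^L equals the (-1)-eigenspace
    have hsum : ∀ (H : Fin k → ℝ) (j : Fin k),
        ∑ i ∈ univ.filter (fun i => i = j ∨ i = σ j), (s i : ℝ) * H i =
          if σ j = j then (s j : ℝ) * H j
          else (s j : ℝ) * H j + (s (σ j) : ℝ) * H (σ j) := by
      intro H j
      rw [Finset.sum_filter]
      by_cases hj : σ j = j
      · rw [if_pos hj]
        have hpt : ∀ i, (if i = j ∨ i = σ j then (s i : ℝ) * H i else 0) =
            (if i = j then (s i : ℝ) * H i else 0) := by
          intro i; simp [hj]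
        rw [Finset.sum_congr rfl (fun i _ => hpt i), Finset.sum_ite_eq' univ j]
        simp
      · rw [if_neg hj]
        have hpt : ∀ i, (if i = j ∨ i = σ j then (s i : ℝ) * H i else 0) =
            (if i = j then (s i : ℝ) * H i else 0) +
            (if i = σ j then (s i : ℝ) * H i else 0) := by
          intro i
          by_cases h1 : i = j
          · have h2 : i ≠ σ j := fun h => hj (by rw [← h, h1])
            rw [if_pos (Or.inl h1), if_pos h1, if_neg h2, add_zero]
          · by_cases h2 : i = σ j
            · rw [if_pos (Or.inr h2), if_neg h1, if_pos h2, zero_add]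
            · rw [if_neg (by tauto), if_neg h1, if_neg h2, add_zero]
        rw [Finset.sum_congr rfl (fun i _ => hpt i), Finset.sum_add_distrib,
          Finset.sum_ite_eq' univ j, Finset.sum_ite_eq' univ (σ j)]
        simp
    have hfilt : ∀ j : Fin k, (univ.filter (fun i => r.r i j)) =
        (univ.filter (fun i : Fin k => i = j ∨ i = σ j)) :=
      fun j => Finset.filter_congr (fun i _ => Iff.rfl)
    have hXr : {H : Fin k → ℝ | ∀ j,
          ∑ i ∈ univ.filter (fun i => r.r i j), (s i : ℝ) * H i = 0} =
        {H : Fin k → ℝ | ∀ i, H (σ i) = -H i} := by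
      ext H
      simp only [Set.mem_setOf_eq, hfilt]
      constructor
      · intro h i
        have hi := h i
        rw [hsum H i] at hi
        by_cases hfix : σ i = i
        · rw [if_pos hfix] at hi
          have hsi : (s i : ℝ) ≠ 0 := Nat.cast_ne_zero.mpr (hs i).ne'
          have : H i = 0 := by
            rcases mul_eq_zero.mp hi with h' | h'
            · exact absurd h' hsi
            · exact h'
          rw [hfix, this]; ring
        · rw [if_neg hfix, hsz i] at hi
          have hsi : (s i : ℝ) ≠ 0 := Nat.cast_ne_zero.mpr (hs i).ne'
          have : (s i : ℝ) * (H i + H (σ i)) = 0 := by linarith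
          rcases mul_eq_zero.mp this with h' | h'
          · exact absurd h' hsi
          · linarith
      · intro h j
        rw [hsum H j]
        by_cases hfix : σ j = j
        · rw [if_pos hfix]
          have := h j
          rw [hfix] at this
          have : H j = 0 := by linarith
          rw [this]; ring
        · rw [if_neg hfix, hsz j, h j]; ring
    refine ⟨r, ?_, ?_⟩
    · exact hXr
    intro r' hr'
    apply Setoid.ext
    intro a b
    show r'.r a b ↔ r.r a b
    by_cases hab : a = b
    · subst hab
      exact ⟨fun _ => Or.inl rfl, fun _ => r'.refl' a⟩
    · rw [← key_setoid s hs r' a b hab, ← key_setoid s hs r a b hab]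
      have h1 := Set.ext_iff.mp hr'
        (fun i => (if i = a then ((s a : ℝ))⁻¹ else 0) - (if i = b then ((s b : ℝ))⁻¹ else 0))
      have h2 := Set.ext_iff.mp hXr
        (fun i => (if i = a then ((s a : ℝ))⁻¹ else 0) - (if i = b then ((s b : ℝ))⁻¹ else 0))
      simp only [Set.mem_setOf_eq] at h1 h2
      exact h1.trans h2.symm
  case inj =>
    intro σ' hinv' _ hset
    have hσ'σ' : ∀ i, σ' (σ' i) = i := by
      intro i
      have := congrArg (fun τ : Equiv.Perm (Fin k) => τ i) hinv'
      simpa [Equiv.Perm.mul_apply] using this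
    have hmem : ∀ H : Fin k → ℝ, (∀ i, H (σ' i) = -H i) ↔ (∀ i, H (σ i) = -H i) := by
      intro H
      constructor
      · intro h; exact (Set.ext_iff.mp hset H).mp h
      · intro h; exact (Set.ext_iff.mp hset H).mpr h
    refine Equiv.ext fun i => ?_
    by_cases hfix : σ i = i
    · by_cases hfix' : σ' i = i
      · rw [hfix, hfix']
      · exfalso
        set H : Fin k → ℝ := fun l => (if l = i then (1:ℝ) else 0) - (if l = σ' i then 1 else 0)
          with hHdef
        have hHmem : ∀ l, H (σ' l) = -H l := by
          intro l
          by_cases hl1 : l = i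
          · subst hl1
            simp [hHdef, hfix', Ne.symm hfix']
          · by_cases hl2 : l = σ' i
            · subst hl2
              simp [hHdef, hσ'σ', hfix', Ne.symm hfix']
            · have e1 : σ' l ≠ σ' i := fun h => hl1 (σ'.injective h)
              have e2 : σ' l ≠ i := fun h => hl2 (by rw [← h, hσ'σ'])
              simp [hHdef, e1, e2, hl1, hl2]
        have := (hmem H).mp hHmem i
        rw [hfix] at this
        have hHi : H i = 1 := by simp [hHdef, Ne.symm hfix']
        rw [hHi] at this
        norm_num at this
    · set H : Fin k → ℝ := fun l => (if l = i then (1:ℝ) else 0) - (if l = σ i then 1 else 0)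
        with hHdef
      have hHmem : ∀ l, H (σ l) = -H l := by
        intro l
        by_cases hl1 : l = i
        · subst hl1
          simp [hHdef, hfix, Ne.symm hfix]
        · by_cases hl2 : l = σ i
          · subst hl2
            simp [hHdef, hσσ, hfix, Ne.symm hfix]
          · have e1 : σ l ≠ σ i := fun h => hl1 (σ.injective h)
            have e2 : σ l ≠ i := fun h => hl2 (by rw [← h, hσσ])
            simp [hHdef, e1, e2, hl1, hl2]
      have hval := (hmem H).mpr hHmem i
      have hHi : H i = 1 := by simp [hHdef, Ne.symm hfix]
      rw [hHi] at hval
      by_cases c1 : σ' i = i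
      · rw [c1, hHi] at hval; norm_num at hval
      · by_cases c2 : σ' i = σ i
        · exact c2
        · have : H (σ' i) = 0 := by simp [hHdef, c1, c2]
          rw [this] at hval; norm_num at hval
end

section
/- Let Q ⊆ R be standard parabolic subgroups of GL_n, w ∈ _RW_P and w′ ∈ _QW^R_{R_w}·w with P_π ⊆ P_{w′}. Then the following are equivalent: (a) P_w = P_{w′}; (b) the projection (w′ν_{w′}^w)_Q^R of w′ν_{P_{w′}}^{P_w} onto a_Q^R is zero; (c) w′ ∈ W^R(R_w;Q)·w. Moreover for all ϖ^∨ ∈ Δ̂_Q^{R,∨} one has ⟨w′ν_{w′}^w, ϖ^∨⟩ ≤ 0, with equality if and only if ϖ^∨ ∈ w′·a_{P_w}^G. -/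
open Finset

/-- Successor inside `Fin n` (identity at the last element). -/
def nxt (n : ℕ) (t : Fin n) : Fin n := if h : (t : ℕ) + 1 < n then ⟨(t : ℕ) + 1, h⟩ else t

/-- The Levi relation of `P_w = (M_P ∩ w⁻¹Rw)N_P` for `w ∈ _RW_P`. -/
abbrev rPwRel (n : ℕ) (βP βR : Fin n → ℕ) (w : Equiv.Perm (Fin n)) (a b : Fin n) : Prop :=
  βP a = βP b ∧ βR (w a) = βR (w b)

/-- The Levi relation of `P_{w'} = (M_P ∩ w'⁻¹Qw')N_P` for `w' ∈ _QW_P`. -/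
abbrev rPw'Rel (n : ℕ) (βP βQ : Fin n → ℕ) (w' : Equiv.Perm (Fin n)) (a b : Fin n) : Prop :=
  βP a = βP b ∧ βQ (w' a) = βQ (w' b)

/-- The set of simple-root positions of `Δ_{P_{w'}}^{P_w}` (cuts of `P_{w'}` inside `P_w`),
for `w ∈ _RW_P`, `w₁ ∈ _QW^R_{R_w}` and `w' = w₁w`. -/
def cutSet (n : ℕ) (βP βQ βR : Fin n → ℕ) (w w₁ : Equiv.Perm (Fin n)) : Finset (Fin n) :=
  univ.filter fun t => (t : ℕ) + 1 < n ∧ rPwRel n βP βR w t (nxt n t) ∧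
    ¬ rPw'Rel n βP βQ (w₁ * w) t (nxt n t)

/-- `ν = ∑_{α ∈ Δ_{P_{w'}}^{P_w}} c_α α` : a combination of the simple roots at the cuts. -/
noncomputable def nuC (n : ℕ) (C : Finset (Fin n)) (c : Fin n → ℝ) : Fin n → ℝ :=
  fun a => ∑ t ∈ C, c t * ((if a = t then 1 else 0) - (if a = nxt n t then 1 else 0))

/-- The coweight `ϖ_u^∨ ∈ Δ̂_Q^{R,∨}` attached to a cut `u` of `Q` inside an `R`-block:
value `1 - p/M` on the part of the `R`-block of `u` up to `u`, `-p/M` on the rest of it,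
`0` outside, where `M` is the size of the `R`-block and `p` the size of the first part. -/
noncomputable def wtv (n : ℕ) (βR : Fin n → ℕ) (u : Fin n) : Fin n → ℝ := fun b =>
  if βR b = βR u then
    (if (b : ℕ) ≤ (u : ℕ) then
      1 - ((univ.filter fun x : Fin n => βR x = βR u ∧ (x : ℕ) ≤ (u : ℕ)).card : ℝ) /
        ((univ.filter fun x : Fin n => βR x = βR u).card : ℝ)
    else
      -(((univ.filter fun x : Fin n => βR x = βR u ∧ (x : ℕ) ≤ (u : ℕ)).card : ℝ) /
        ((univ.filter fun x : Fin n => βR x = βR u).card : ℝ)))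
  else 0

/-- Mean of `H` over the `β`-block of `a` (the orthogonal projection onto `a_β`). -/
noncomputable def meanB (n : ℕ) (β : Fin n → ℕ) (H : Fin n → ℝ) (a : Fin n) : ℝ :=
  (∑ b ∈ univ.filter (fun b => β b = β a), H b) /
    ((univ.filter fun b : Fin n => β b = β a).card : ℝ)

/-- Orthogonal projection onto `a_Q^R` (for `Q ⊆ R`): `proj_Q - proj_R`. -/
noncomputable def projQR (n : ℕ) (βQ βR : Fin n → ℕ) (H : Fin n → ℝ) (a : Fin n) : ℝ :=
  meanB n βQ H a - meanB n βR H a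

lemma nxt_eq {n : ℕ} (t : Fin n) (h : (t : ℕ) + 1 < n) : nxt n t = ⟨(t:ℕ)+1, h⟩ := dif_pos h

lemma mono_interval {n : ℕ} {β : Fin n → ℕ} (hm : Monotone β) {a b x : Fin n}
    (hab : β a = β b) (h1 : a ≤ x) (h2 : x ≤ b) : β x = β a :=
  le_antisymm (hab ▸ hm h2) (hm h1)

lemma fin_chain {n : ℕ} {α : Sort*} (f : Fin n → α) (a b : Fin n) (hab : a ≤ b)
    (h : ∀ t : Fin n, a ≤ t → (t : ℕ) < (b : ℕ) → f t = f (nxt n t)) : f a = f b := by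
  have hb := b.isLt
  have key : ∀ k, (a:ℕ) ≤ k → ∀ hk2 : k ≤ (b:ℕ), f a = f ⟨k, lt_of_le_of_lt hk2 hb⟩ := by
    intro k hk1
    induction k, hk1 using Nat.le_induction with
    | base => intro _; congr 1
    | succ m hm ih =>
      intro hk2
      have hmb : m < (b:ℕ) := by omega
      have h1 : f (⟨m, by omega⟩ : Fin n) = f (nxt n ⟨m, by omega⟩) :=
        h ⟨m, by omega⟩ (by simpa [Fin.le_def] using hm) hmb
      have h2 : nxt n (⟨m, by omega⟩ : Fin n) = ⟨m+1, lt_of_le_of_lt hk2 hb⟩ :=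
        nxt_eq _ (show m + 1 < n by omega)
      rw [ih hmb.le, h1, h2]
  have := key (b:ℕ) (by exact hab) le_rfl
  simpa using this

lemma exists_cut {n : ℕ} (β : Fin n → ℕ) (a b : Fin n) (hab : a ≤ b) (hne : β a ≠ β b) :
    ∃ t : Fin n, a ≤ t ∧ (t : ℕ) < (b : ℕ) ∧ β t ≠ β (nxt n t) := by
  by_contra hcon
  push_neg at hcon
  exact hne (fin_chain β a b hab hcon)

lemma le_cut {n : ℕ} {βQ : Fin n → ℕ} (hmQ : Monotone βQ) {u : Fin n}
    (hu1 : (u : ℕ) + 1 < n) (hu3 : βQ u ≠ βQ (nxt n u)) (b : Fin n) :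
    (b : ℕ) ≤ (u : ℕ) ↔ βQ b ≤ βQ u := by
  constructor
  · intro h; exact hmQ h
  · intro h
    by_contra hb
    push_neg at hb
    have h1 : nxt n u ≤ b := by rw [nxt_eq u hu1]; exact hb
    have h2 : βQ u ≤ βQ (nxt n u) := hmQ (by rw [nxt_eq u hu1]; exact Nat.le_succ _)
    have := hmQ h1
    omega

lemma wtv_le {n : ℕ} {βR : Fin n → ℕ} (u : Fin n) {b b' : Fin n}
    (hR : βR b = βR b') (hbb : (b : ℕ) ≤ (b' : ℕ)) : wtv n βR u b' ≤ wtv n βR u b := by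
  unfold wtv
  by_cases h : βR b = βR u
  · rw [if_pos h, if_pos (hR.symm.trans h)]
    by_cases h1 : (b' : ℕ) ≤ (u : ℕ)
    · rw [if_pos h1, if_pos (le_trans hbb h1)]
    · rw [if_neg h1]
      by_cases h2 : (b : ℕ) ≤ (u : ℕ)
      · rw [if_pos h2]; linarith [sub_nonneg.2 (le_refl (0:ℝ))]
      · rw [if_neg h2]
  · rw [if_neg h, if_neg (fun hh => h (hR.trans hh))]

lemma wtv_strict {n : ℕ} {βR : Fin n → ℕ} (u : Fin n) {b b' : Fin n}
    (hb : βR b = βR u) (hb' : βR b' = βR u) (h1 : (b : ℕ) ≤ (u : ℕ))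
    (h2 : ¬ (b' : ℕ) ≤ (u : ℕ)) : wtv n βR u b' < wtv n βR u b := by
  unfold wtv
  rw [if_pos hb, if_pos hb', if_pos h1, if_neg h2]
  linarith

lemma wtv_Qconst {n : ℕ} {βQ βR : Fin n → ℕ} (hmQ : Monotone βQ)
    (hQR : ∀ a b : Fin n, βQ a = βQ b → βR a = βR b) {u : Fin n}
    (hu1 : (u : ℕ) + 1 < n) (hu3 : βQ u ≠ βQ (nxt n u)) {b b' : Fin n}
    (hQ : βQ b = βQ b') : wtv n βR u b = wtv n βR u b' := by
  have hR : βR b = βR b' := hQR _ _ hQ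
  have hside : ((b : ℕ) ≤ (u : ℕ)) ↔ ((b' : ℕ) ≤ (u : ℕ)) := by
    rw [le_cut hmQ hu1 hu3, le_cut hmQ hu1 hu3, hQ]
  unfold wtv
  by_cases h : βR b = βR u
  · rw [if_pos h, if_pos (hR.symm.trans h)]
    by_cases h1 : (b : ℕ) ≤ (u : ℕ)
    · rw [if_pos h1, if_pos (hside.1 h1)]
    · rw [if_neg h1, if_neg (fun hh => h1 (hside.2 hh))]
  · rw [if_neg h, if_neg (fun hh => h (hR.trans hh))]

lemma pairing {n : ℕ} (C : Finset (Fin n)) (c : Fin n → ℝ) (f : Fin n → ℝ) :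
    ∑ a, nuC n C c a * f a = ∑ t ∈ C, c t * (f t - f (nxt n t)) := by
  unfold nuC
  simp only [Finset.sum_mul]
  rw [Finset.sum_comm]
  refine Finset.sum_congr rfl fun t _ => ?_
  simp only [mul_assoc, ← Finset.mul_sum]
  congr 1
  simp [sub_mul, Finset.sum_sub_distrib, ite_mul]

lemma card_block_eq {n : ℕ} (β : Fin n → ℕ) {a b : Fin n} (h : β a = β b) :
    (univ.filter fun x => β x = β a).card = (univ.filter fun x => β x = β b).card := by
  congr 1
  apply Finset.filter_congr
  intro x _
  simp [h]

lemma meanB_symm {n : ℕ} (β : Fin n → ℕ) (H G : Fin n → ℝ) :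
    ∑ b, meanB n β H b * G b = ∑ b, H b * meanB n β G b := by
  have key : ∀ (F K : Fin n → ℝ), ∑ b, meanB n β F b * K b
      = ∑ b, ∑ x, if β x = β b then
          F x * K b / ((univ.filter fun y : Fin n => β y = β b).card : ℝ) else 0 := by
    intro F K
    refine Finset.sum_congr rfl fun b _ => ?_
    unfold meanB
    rw [div_mul_eq_mul_div, Finset.sum_mul, Finset.sum_div, ← Finset.sum_filter]
  rw [key H G, show ∑ b, H b * meanB n β G b = ∑ b, meanB n β G b * H b from by
    simp [mul_comm], key G H, Finset.sum_comm]
  refine Finset.sum_congr rfl fun b _ => Finset.sum_congr rfl fun x _ => ?_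
  by_cases h : β b = β x
  · rw [if_pos h, if_pos h.symm, card_block_eq β h, mul_comm (H b)]
  · rw [if_neg h, if_neg (fun hh => h hh.symm)]

lemma meanB_const {n : ℕ} (β : Fin n → ℕ) (G : Fin n → ℝ) (b : Fin n)
    (hc : ∀ x, β x = β b → G x = G b) : meanB n β G b = G b := by
  unfold meanB
  have hb : (0:ℝ) < ((univ.filter fun x : Fin n => β x = β b).card : ℝ) := by
    have : b ∈ univ.filter fun x : Fin n => β x = β b := by simp
    exact_mod_cast Finset.card_pos.2 ⟨b, this⟩
  rw [Finset.sum_congr rfl (fun x hx => hc x (by simpa using hx))]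
  rw [Finset.sum_const, nsmul_eq_mul, mul_comm, mul_div_assoc, div_self hb.ne', mul_one]

lemma meanB_zero_of {n : ℕ} (β : Fin n → ℕ) (G : Fin n → ℝ) (b : Fin n)
    (h : ∑ x ∈ univ.filter (fun x => β x = β b), G x = 0) : meanB n β G b = 0 := by
  unfold meanB
  rw [h, zero_div]

lemma wtv_block_sum {n : ℕ} (βR : Fin n → ℕ) (u b : Fin n) :
    ∑ x ∈ univ.filter (fun x => βR x = βR b), wtv n βR u x = 0 := by
  by_cases hb : βR b = βR u
  · have hfil : univ.filter (fun x : Fin n => βR x = βR b)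
        = univ.filter (fun x => βR x = βR u) := by
      apply Finset.filter_congr; intro x _; simp [hb]
    rw [hfil]
    set M := ((univ.filter fun x : Fin n => βR x = βR u).card : ℝ) with hMdef
    set p := ((univ.filter fun x : Fin n => βR x = βR u ∧ (x:ℕ) ≤ (u:ℕ)).card : ℝ) with hpdef
    rw [← Finset.sum_filter_add_sum_filter_not (univ.filter fun x : Fin n => βR x = βR u)
        (fun x : Fin n => (x:ℕ) ≤ (u:ℕ))]
    have e1 : ∀ x ∈ (univ.filter fun x : Fin n => βR x = βR u).filter
        (fun x : Fin n => (x:ℕ) ≤ (u:ℕ)), wtv n βR u x = 1 - p / M := by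
      intro x hx
      simp only [Finset.mem_filter, Finset.mem_univ, true_and] at hx
      unfold wtv; rw [if_pos hx.1, if_pos hx.2]
    have e2 : ∀ x ∈ (univ.filter fun x : Fin n => βR x = βR u).filter
        (fun x : Fin n => ¬ (x:ℕ) ≤ (u:ℕ)), wtv n βR u x = -(p / M) := by
      intro x hx
      simp only [Finset.mem_filter, Finset.mem_univ, true_and] at hx
      unfold wtv; rw [if_pos hx.1, if_neg hx.2]
    rw [Finset.sum_congr rfl e1, Finset.sum_congr rfl e2, Finset.sum_const, Finset.sum_const,
      nsmul_eq_mul, nsmul_eq_mul]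
    have hcard1 : (((univ.filter fun x : Fin n => βR x = βR u).filter
        (fun x : Fin n => (x:ℕ) ≤ (u:ℕ))).card : ℝ) = p := by
      rw [hpdef]; norm_cast; rw [Finset.filter_filter]
    have hcard2 : p + (((univ.filter fun x : Fin n => βR x = βR u).filter
        (fun x : Fin n => ¬ (x:ℕ) ≤ (u:ℕ))).card : ℝ) = M := by
      rw [← hcard1, hMdef]; norm_cast
      exact Finset.card_filter_add_card_filter_not _
    have hMpos : (0:ℝ) < M := by
      rw [hMdef]
      have : u ∈ univ.filter fun x : Fin n => βR x = βR u := by simp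
      exact_mod_cast Finset.card_pos.2 ⟨u, this⟩
    rw [hcard1]
    set q := (((univ.filter fun x : Fin n => βR x = βR u).filter
        (fun x : Fin n => ¬ (x:ℕ) ≤ (u:ℕ))).card : ℝ)
    field_simp
    nlinarith [hcard2]
  · apply Finset.sum_eq_zero
    intro x hx
    simp only [Finset.mem_filter, Finset.mem_univ, true_and] at hx
    unfold wtv
    rw [if_neg (fun hh => hb ((hx.symm.trans hh)))]

/-- Lemma `positivite-nu`: for `Q ⊆ R` standard, `w ∈ _RW_P`, `w' = w₁w ∈ _QW^R_{R_w}·w`,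
and `ν = ν_{w'}^w` a strictly negative combination of the simple roots of `Δ_{P_{w'}}^{P_w}`:
(1) `⟨w'ν, ϖ^∨⟩ ≤ 0` for every `ϖ^∨ ∈ Δ̂_Q^{R,∨}`, with equality iff `ϖ^∨ ∈ w' a_{P_w}^G`
(i.e. `ϖ^∨ ∘ w'` is constant on the `P_w`-blocks);
(2) `P_w = P_{w'}` iff `(w'ν)_Q^R = 0` iff `w' ∈ W^R(R_w;Q)·w`. -/
theorem stmt_10 (n : ℕ) (βP βQ βR : Fin n → ℕ)
    (hmP : Monotone βP) (hmQ : Monotone βQ) (hmR : Monotone βR)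
    (hQR : ∀ a b : Fin n, βQ a = βQ b → βR a = βR b)
    (w w₁ : Equiv.Perm (Fin n))
    (hw : relW n (relB n βR) (relB n βP) w)
    (hw₁L : inLevi n βR w₁)
    (hw₁ : relW n (relB n βQ) (relRw n βP βR w) w₁)
    (c : Fin n → ℝ) (hc : ∀ t ∈ cutSet n βP βQ βR w w₁, c t < 0) :
    (∀ u : Fin n, (u : ℕ) + 1 < n → βR u = βR (nxt n u) → βQ u ≠ βQ (nxt n u) →
      (∑ a, nuC n (cutSet n βP βQ βR w w₁) c a * wtv n βR u ((w₁ * w) a)) ≤ 0 ∧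
      ((∑ a, nuC n (cutSet n βP βQ βR w w₁) c a * wtv n βR u ((w₁ * w) a)) = 0 ↔
        ∀ a b : Fin n, rPwRel n βP βR w a b →
          wtv n βR u ((w₁ * w) a) = wtv n βR u ((w₁ * w) b))) ∧
    ((∀ a b : Fin n, rPwRel n βP βR w a b → rPw'Rel n βP βQ (w₁ * w) a b) ↔
      ∀ a : Fin n,
        projQR n βQ βR (fun b => nuC n (cutSet n βP βQ βR w w₁) c ((w₁ * w)⁻¹ b)) a = 0) ∧
    ((∀ a b : Fin n, rPwRel n βP βR w a b → rPw'Rel n βP βQ (w₁ * w) a b) ↔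
      ∀ a b : Fin n, relRw n βP βR w a b → βQ (w₁ a) = βQ (w₁ b)) := by
  classical
  set C := cutSet n βP βQ βR w w₁ with hCdef
  have memC : ∀ t : Fin n, t ∈ C ↔ ((t:ℕ)+1 < n ∧ rPwRel n βP βR w t (nxt n t) ∧
      ¬ rPw'Rel n βP βQ (w₁ * w) t (nxt n t)) := by
    intro t; rw [hCdef]; unfold cutSet; simp
  have hwmono : ∀ a b : Fin n, a ≤ b → βP a = βP b → w a ≤ w b := by
    intro a b hab hP
    rcases eq_or_lt_of_le hab with h | h
    · rw [h]
    · exact (hw.1 a b h hP).le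
  have interval : ∀ a b x : Fin n, rPwRel n βP βR w a b → a ≤ x → x ≤ b →
      rPwRel n βP βR w a x := by
    intro a b x hab h1 h2
    have hP : βP x = βP a := mono_interval hmP hab.1 h1 h2
    refine ⟨hP.symm, ?_⟩
    have l1 : w a ≤ w x := hwmono a x h1 hP.symm
    have l2 : w x ≤ w b := hwmono x b h2 (hP.trans hab.1)
    exact (mono_interval hmR hab.2 l1 l2).symm
  have step : ∀ t : Fin n, (t:ℕ)+1 < n → rPwRel n βP βR w t (nxt n t) →
      (w₁ * w) t < (w₁ * w) (nxt n t) ∧ βR ((w₁ * w) t) = βR ((w₁ * w) (nxt n t)) := by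
    intro t ht1 ht2
    have htlt : t < nxt n t := by rw [nxt_eq t ht1]; simp [Fin.lt_def]
    have h1 : w t < w (nxt n t) := hw.1 t (nxt n t) htlt ht2.1
    have h2 : βP (w⁻¹ (w t)) = βP (w⁻¹ (w (nxt n t))) := by
      simpa [Equiv.symm_apply_apply] using ht2.1
    have h3 : w₁ (w t) < w₁ (w (nxt n t)) := hw₁.1 _ _ h1 ⟨ht2.2, h2⟩
    refine ⟨h3, ?_⟩
    show βR (w₁ (w t)) = βR (w₁ (w (nxt n t)))
    rw [hw₁L (w t), hw₁L (w (nxt n t))]; exact ht2.2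
  have hterm : ∀ u : Fin n, ∀ t ∈ C,
      c t * (wtv n βR u ((w₁ * w) t) - wtv n βR u ((w₁ * w) (nxt n t))) ≤ 0 := by
    intro u t htC
    obtain ⟨ht1, ht2, ht3⟩ := (memC t).1 htC
    obtain ⟨hlt, hRblk⟩ := step t ht1 ht2
    have hd : wtv n βR u ((w₁ * w) (nxt n t)) ≤ wtv n βR u ((w₁ * w) t) :=
      wtv_le u hRblk (Fin.le_def.1 hlt.le)
    have hcn := hc t htC
    nlinarith [sub_nonneg.2 hd]
  have part1 : ∀ u : Fin n, (u : ℕ) + 1 < n → βR u = βR (nxt n u) → βQ u ≠ βQ (nxt n u) →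
      (∑ a, nuC n C c a * wtv n βR u ((w₁ * w) a)) ≤ 0 ∧
      ((∑ a, nuC n C c a * wtv n βR u ((w₁ * w) a)) = 0 ↔
        ∀ a b : Fin n, rPwRel n βP βR w a b →
          wtv n βR u ((w₁ * w) a) = wtv n βR u ((w₁ * w) b)) := by
    intro u hu1 _hu2 hu3
    have hpair : (∑ a, nuC n C c a * wtv n βR u ((w₁ * w) a))
        = ∑ t ∈ C, c t * (wtv n βR u ((w₁ * w) t) - wtv n βR u ((w₁ * w) (nxt n t))) :=
      pairing C c (fun a => wtv n βR u ((w₁ * w) a))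
    constructor
    · rw [hpair]; exact Finset.sum_nonpos (hterm u)
    · rw [hpair]
      constructor
      · intro hzero a b hab
        have hterm0 : ∀ t ∈ C,
            c t * (wtv n βR u ((w₁ * w) t) - wtv n βR u ((w₁ * w) (nxt n t))) = 0 :=
          (Finset.sum_eq_zero_iff_of_nonpos (hterm u)).1 hzero
        have adj : ∀ t : Fin n, (t:ℕ)+1 < n → rPwRel n βP βR w t (nxt n t) →
            wtv n βR u ((w₁ * w) t) = wtv n βR u ((w₁ * w) (nxt n t)) := by
          intro t ht1 ht2
          by_cases h3 : rPw'Rel n βP βQ (w₁ * w) t (nxt n t)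
          · exact wtv_Qconst hmQ hQR hu1 hu3 h3.2
          · have htC : t ∈ C := (memC t).2 ⟨ht1, ht2, h3⟩
            have h0 := hterm0 t htC
            rcases mul_eq_zero.1 h0 with h | h
            · exact absurd h (hc t htC).ne
            · linarith [sub_eq_zero.1 h]
        have main : ∀ a b : Fin n, a ≤ b → rPwRel n βP βR w a b →
            wtv n βR u ((w₁ * w) a) = wtv n βR u ((w₁ * w) b) := by
          intro a b hab' hrel
          apply fin_chain (fun x => wtv n βR u ((w₁ * w) x)) a b hab'
          intro t h1 h2
          have ht1 : (t:ℕ)+1 < n := by have := b.isLt; omega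
          apply adj t ht1
          have hnle : nxt n t ≤ b := by
            rw [nxt_eq t ht1]; rw [Fin.le_def]; simpa using h2
          have r1 : rPwRel n βP βR w a t := interval a b t hrel h1 (by rw [Fin.le_def]; omega)
          have r2 : rPwRel n βP βR w a (nxt n t) := interval a b (nxt n t) hrel
            (le_trans h1 (by rw [nxt_eq t ht1, Fin.le_def]; simp)) hnle
          exact ⟨r1.1.symm.trans r2.1, r1.2.symm.trans r2.2⟩
        rcases le_total a b with h | h
        · exact main a b h hab
        · exact (main b a h ⟨hab.1.symm, hab.2.symm⟩).symm
      · intro hconst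
        apply Finset.sum_eq_zero
        intro t htC
        obtain ⟨ht1, ht2, _ht3⟩ := (memC t).1 htC
        rw [hconst t (nxt n t) ht2]; ring
  refine ⟨part1, ?_, ?_⟩
  · constructor
    · intro h a
      have hCempty : C = ∅ := by
        rw [Finset.eq_empty_iff_forall_notMem]
        intro t htC
        obtain ⟨ht1, ht2, ht3⟩ := (memC t).1 htC
        exact ht3 (h t (nxt n t) ht2)
      have hnu : ∀ x, nuC n C c x = 0 := by intro x; rw [hCempty]; simp [nuC]
      simp [projQR, meanB, hnu]
    · intro hproj a b hab
      have hCempty : C = ∅ := by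
        rw [Finset.eq_empty_iff_forall_notMem]
        intro t htC
        obtain ⟨ht1, ht2, ht3⟩ := (memC t).1 htC
        obtain ⟨hlt, hRblk⟩ := step t ht1 ht2
        have hQne : βQ ((w₁ * w) t) ≠ βQ ((w₁ * w) (nxt n t)) := fun hq => ht3 ⟨ht2.1, hq⟩
        obtain ⟨u, hu1, hu2, hu3⟩ :=
          exists_cut βQ ((w₁ * w) t) ((w₁ * w) (nxt n t)) hlt.le hQne
        have hun : (u:ℕ)+1 < n := by have := ((w₁ * w) (nxt n t)).isLt; omega
        have hR1 : βR u = βR ((w₁ * w) t) :=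
          mono_interval hmR hRblk hu1 (by rw [Fin.le_def]; omega)
        have e1 : ∀ b, meanB n βQ (wtv n βR u) b = wtv n βR u b := fun b =>
          meanB_const _ _ b (fun x hx => wtv_Qconst hmQ hQR hun hu3 hx)
        have e2 : ∀ b, meanB n βR (wtv n βR u) b = 0 := fun b =>
          meanB_zero_of _ _ b (wtv_block_sum βR u b)
        have hpz : (∑ x, nuC n C c x * wtv n βR u ((w₁ * w) x)) = 0 := by
          calc ∑ x, nuC n C c x * wtv n βR u ((w₁ * w) x)
              = ∑ b, nuC n C c ((w₁ * w)⁻¹ b) * wtv n βR u b := by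
                refine Fintype.sum_equiv (w₁ * w) _ _ (fun x => ?_)
                simp [Equiv.symm_apply_apply]
            _ = ∑ b, nuC n C c ((w₁ * w)⁻¹ b) * meanB n βQ (wtv n βR u) b := by
                refine Finset.sum_congr rfl fun b _ => ?_; rw [e1 b]
            _ = ∑ b, meanB n βQ (fun x => nuC n C c ((w₁ * w)⁻¹ x)) b * wtv n βR u b :=
                (meanB_symm βQ _ _).symm
            _ = ∑ b, meanB n βR (fun x => nuC n C c ((w₁ * w)⁻¹ x)) b * wtv n βR u b := by
                refine Finset.sum_congr rfl fun b _ => ?_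
                have hp := hproj b
                unfold projQR at hp
                have : meanB n βQ (fun x => nuC n C c ((w₁ * w)⁻¹ x)) b
                    = meanB n βR (fun x => nuC n C c ((w₁ * w)⁻¹ x)) b := by linarith
                rw [this]
            _ = ∑ b, (fun x => nuC n C c ((w₁ * w)⁻¹ x)) b * meanB n βR (wtv n βR u) b :=
                meanB_symm βR _ _
            _ = 0 := by simp only [e2, mul_zero, Finset.sum_const_zero]
        have hterm0 := (Finset.sum_eq_zero_iff_of_nonpos (hterm u)).1
          (by rw [← pairing C c (fun a => wtv n βR u ((w₁ * w) a))]; exact hpz)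
        have h0 := hterm0 t htC
        have hst : wtv n βR u ((w₁ * w) (nxt n t)) < wtv n βR u ((w₁ * w) t) := by
          apply wtv_strict u hR1.symm (hRblk.symm.trans hR1.symm) (Fin.le_def.1 hu1)
          omega
        have := mul_neg_of_neg_of_pos (hc t htC) (sub_pos.2 hst)
        linarith [h0, this]
      refine ⟨hab.1, ?_⟩
      have main2 : ∀ a b : Fin n, a ≤ b → rPwRel n βP βR w a b →
          βQ ((w₁ * w) a) = βQ ((w₁ * w) b) := by
        intro a b hab' hrel
        apply fin_chain (fun x => βQ ((w₁ * w) x)) a b hab'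
        intro t h1 h2
        have ht1 : (t:ℕ)+1 < n := by have := b.isLt; omega
        have hnle : nxt n t ≤ b := by rw [nxt_eq t ht1]; rw [Fin.le_def]; simpa using h2
        have r1 : rPwRel n βP βR w a t := interval a b t hrel h1 (by rw [Fin.le_def]; omega)
        have r2 : rPwRel n βP βR w a (nxt n t) := interval a b (nxt n t) hrel
          (le_trans h1 (by rw [nxt_eq t ht1, Fin.le_def]; simp)) hnle
        have hrt : rPwRel n βP βR w t (nxt n t) := ⟨r1.1.symm.trans r2.1, r1.2.symm.trans r2.2⟩
        by_cases h3 : rPw'Rel n βP βQ (w₁ * w) t (nxt n t)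
        · exact h3.2
        · exact absurd ((memC t).2 ⟨ht1, hrt, h3⟩) (by rw [hCempty]; simp)
      rcases le_total a b with h | h
      · exact main2 a b h hab
      · exact (main2 b a h ⟨hab.1.symm, hab.2.symm⟩).symm
  · constructor
    · intro h a b hab
      have hr : rPwRel n βP βR w (w⁻¹ a) (w⁻¹ b) := by
        refine ⟨hab.2, ?_⟩
        simpa [Equiv.apply_symm_apply] using hab.1
      have := (h (w⁻¹ a) (w⁻¹ b) hr).2
      simpa [Equiv.Perm.mul_apply, Equiv.apply_symm_apply] using this
    · intro h a b hab
      refine ⟨hab.1, ?_⟩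
      have hr : relRw n βP βR w (w a) (w b) := by
        refine ⟨hab.2, ?_⟩
        simpa [Equiv.symm_apply_apply] using hab.1
      simpa [Equiv.Perm.mul_apply] using h (w a) (w b) hr
end

section
/- With ν as above: there exists a constant c₁ > 0, depending only on n and the discrete datum, such that for every T ∈ a₀⁺ (i.e., ⟨α,T⟩ ≥ 0 for all simple roots α), every pair of standard parabolics Q ⊆ R, and every w′ ∈ _QW^R_{R_w}·w \ W^R(R_w;Q)·w with P_π ⊆ P_{w′}, one has ⟨(w′ν_{w′}^w)_Q^R, T⟩ ≤ −c₁·d(T), where d(T) = min_{α∈Δ₀} ⟨α,T⟩. -/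
open Finset

/-- Mean over a block only depends on the block. -/
lemma meanB_congr (n : ℕ) (β : Fin n → ℕ) (H : Fin n → ℝ) {a a' : Fin n} (h : β a = β a') :
    meanB n β H a = meanB n β H a' := by
  unfold meanB; rw [h]

/-- Self-adjointness of the block-averaging operator. -/
lemma meanB_adj (n : ℕ) (β : Fin n → ℕ) (H T : Fin n → ℝ) :
    ∑ a, meanB n β H a * T a = ∑ a, H a * meanB n β T a := by
  have hcard : ∀ a b : Fin n, β b = β a →
      ((univ.filter fun x : Fin n => β x = β a).card) =
        ((univ.filter fun x : Fin n => β x = β b).card) := by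
    intro a b h; rw [h]
  calc ∑ a, meanB n β H a * T a
      = ∑ a, ∑ b, (if β b = β a then H b * T a /
          ((univ.filter fun x : Fin n => β x = β b).card : ℝ) else 0) := by
        refine Finset.sum_congr rfl fun a _ => ?_
        unfold meanB
        rw [Finset.sum_div, Finset.sum_mul, Finset.sum_filter]
        refine Finset.sum_congr rfl fun b _ => ?_
        by_cases h : β b = β a
        · rw [if_pos h, if_pos h, hcard a b h, div_mul_eq_mul_div]
        · rw [if_neg h, if_neg h]
    _ = ∑ b, ∑ a, (if β b = β a then H b * T a /
          ((univ.filter fun x : Fin n => β x = β b).card : ℝ) else 0) := Finset.sum_comm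
    _ = ∑ b, H b * meanB n β T b := by
        refine Finset.sum_congr rfl fun b _ => ?_
        unfold meanB
        rw [← mul_div_assoc, Finset.mul_sum, Finset.sum_div, Finset.sum_filter]
        exact Finset.sum_congr rfl fun a _ => if_congr eq_comm rfl rfl

/-- A `δ`-dominant vector decreases by at least `δ` between any two positions. -/
lemma gapT (n : ℕ) (T : Fin n → ℝ) (δ : ℝ) (hδ : 0 ≤ δ)
    (hT : ∀ t : Fin n, (t : ℕ) + 1 < n → δ ≤ T t - T (nxt n t)) :
    ∀ i j : Fin n, i < j → T j + δ ≤ T i := by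
  have key : ∀ m : ℕ, ∀ i j : Fin n, (j : ℕ) = (i : ℕ) + 1 + m → T j + δ ≤ T i := by
    intro m
    induction m with
    | zero =>
      intro i j h
      have h1 : (i : ℕ) + 1 < n := by have := j.isLt; omega
      have hj : nxt n i = j := by
        apply Fin.ext; simp [nxt, h1]; omega
      have := hT i h1
      rw [hj] at this; linarith
    | succ m ih =>
      intro i j h
      have h1 : (i : ℕ) + 1 < n := by have := j.isLt; omega
      set k : Fin n := ⟨(i : ℕ) + 1, h1⟩ with hk
      have h2 : T j + δ ≤ T k := ih k j (by simp [hk]; omega)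
      have hj : nxt n i = k := by apply Fin.ext; simp [nxt, h1]; rfl
      have := hT i h1
      rw [hj] at this; linarith
  intro i j hij
  exact key ((j : ℕ) - (i : ℕ) - 1) i j (by have := Fin.lt_def.mp hij; omega)

/-- Comparison of block means for a `δ`-dominant vector: an earlier block beats a later one. -/
lemma mean_gap (n : ℕ) (βQ : Fin n → ℕ) (hmQ : Monotone βQ) (T : Fin n → ℝ) (δ : ℝ)
    (hgap : ∀ i j : Fin n, i < j → T j + δ ≤ T i) {u v : Fin n} (huv : βQ u < βQ v) :
    meanB n βQ T v + δ ≤ meanB n βQ T u := by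
  set A := univ.filter fun x : Fin n => βQ x = βQ u with hA
  set B := univ.filter fun x : Fin n => βQ x = βQ v with hB
  have huA : u ∈ A := by simp [hA]
  have hvB : v ∈ B := by simp [hB]
  have hcA : 0 < (A.card : ℝ) := by
    exact_mod_cast Finset.card_pos.mpr ⟨u, huA⟩
  have hcB : 0 < (B.card : ℝ) := by
    exact_mod_cast Finset.card_pos.mpr ⟨v, hvB⟩
  have hlt : ∀ a ∈ A, ∀ b ∈ B, a < b := by
    intro a ha b hb
    have ha' : βQ a = βQ u := by simpa [hA] using ha
    have hb' : βQ b = βQ v := by simpa [hB] using hb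
    by_contra h
    push_neg at h
    have := hmQ h
    rw [ha', hb'] at this
    omega
  have step1 : ∀ a ∈ A, meanB n βQ T v + δ ≤ T a := by
    intro a ha
    have h1 : ∑ b ∈ B, T b ≤ ∑ _b ∈ B, (T a - δ) := by
      refine Finset.sum_le_sum fun b hb => ?_
      have := hgap a b (hlt a ha b hb); linarith
    rw [Finset.sum_const, nsmul_eq_mul] at h1
    have : meanB n βQ T v ≤ T a - δ := by
      unfold meanB
      rw [div_le_iff₀ hcB]
      calc ∑ b ∈ B, T b ≤ (B.card : ℝ) * (T a - δ) := h1
        _ = (T a - δ) * (B.card : ℝ) := by ring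
    linarith
  have h2 : (meanB n βQ T v + δ) * (A.card : ℝ) ≤ ∑ a ∈ A, T a := by
    calc (meanB n βQ T v + δ) * (A.card : ℝ) = ∑ _a ∈ A, (meanB n βQ T v + δ) := by
          rw [Finset.sum_const, nsmul_eq_mul]; ring
      _ ≤ ∑ a ∈ A, T a := Finset.sum_le_sum step1
  show meanB n βQ T v + δ ≤ (∑ b ∈ A, T b) / (A.card : ℝ)
  rw [le_div_iff₀ hcA]
  exact h2

/-- If a function changes value between `x` and `y`, it changes at some consecutive step. -/
lemma exists_cut_s11 (n : ℕ) (g : Fin n → ℕ) :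
    ∀ x y : Fin n, x < y → g x ≠ g y →
      ∃ t : Fin n, (x : ℕ) ≤ (t : ℕ) ∧ (t : ℕ) + 1 < n ∧ (t : ℕ) + 1 ≤ (y : ℕ) ∧
        g t ≠ g (nxt n t) := by
  have key : ∀ m : ℕ, ∀ x y : Fin n, (y : ℕ) ≤ m → x < y → g x ≠ g y →
      ∃ t : Fin n, (x : ℕ) ≤ (t : ℕ) ∧ (t : ℕ) + 1 < n ∧ (t : ℕ) + 1 ≤ (y : ℕ) ∧
        g t ≠ g (nxt n t) := by
    intro m
    induction m with
    | zero => intro x y hy hxy _; have := Fin.lt_def.mp hxy; omega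
    | succ m ih =>
      intro x y hy hxy hg
      have hxy' := Fin.lt_def.mp hxy
      have h1 : (y : ℕ) - 1 < n := by have := y.isLt; omega
      set y' : Fin n := ⟨(y : ℕ) - 1, h1⟩ with hy'
      have hny' : nxt n y' = y := by
        apply Fin.ext
        have : ((y' : ℕ)) + 1 < n := by have := y.isLt; simp [hy']; omega
        rw [nxt, dif_pos this]; show (y : ℕ) - 1 + 1 = y; omega
      by_cases hgy : g y' = g y
      · have hxy'' : x < y' := by
          rw [Fin.lt_def]
          have hne : x ≠ y' := by
            intro h; rw [h, hgy] at hg; exact hg rfl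
          have : (x : ℕ) ≠ (y' : ℕ) := fun h => hne (Fin.ext h)
          simp [hy'] at this ⊢; omega
        obtain ⟨t, ht1, ht2, ht3, ht4⟩ := ih x y' (by simp [hy']; omega) hxy''
          (fun h => hg (h.trans hgy))
        exact ⟨t, ht1, ht2, by simp [hy'] at ht3; omega, ht4⟩
      · refine ⟨y', by simp [hy']; omega, by simp [hy']; omega, by simp [hy']; omega, ?_⟩
        rw [hny']; exact hgy
  intro x y hxy hg
  exact key (y : ℕ) x y le_rfl hxy hg

/-- Quantitative negativity (lemma `positivite-nu`, assertion 3): there exists `c₁ > 0`,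
depending only on `n` and the discrete datum (modelled by `βP` and the lower bound `c₀` on the
absolute values of the coefficients of `ν`), such that for all standard parabolics `Q ⊆ R`,
all `w ∈ _RW_P`, `w₁ ∈ _QW^R_{R_w}` with `w' = w₁w ∉ W^R(R_w;Q)·w`, and all dominant `T`
(all consecutive gaps `≥ δ ≥ 0`, so that `d(T) ≥ δ`), one has
`⟨(w'ν_{w'}^w)_Q^R, T⟩ ≤ -c₁ δ`. -/
theorem stmt_11 (n : ℕ) (βP : Fin n → ℕ) (hmP : Monotone βP) (c₀ : ℝ) (hc₀ : 0 < c₀) :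
    ∃ c₁ : ℝ, 0 < c₁ ∧
      ∀ (βQ βR : Fin n → ℕ), Monotone βQ → Monotone βR →
      (∀ a b : Fin n, βQ a = βQ b → βR a = βR b) →
      ∀ (w w₁ : Equiv.Perm (Fin n)),
        relW n (relB n βR) (relB n βP) w → inLevi n βR w₁ →
        relW n (relB n βQ) (relRw n βP βR w) w₁ →
      ∀ c : Fin n → ℝ, (∀ t ∈ cutSet n βP βQ βR w w₁, c t ≤ -c₀) →
      (¬ ∀ a b : Fin n, relRw n βP βR w a b → βQ (w₁ a) = βQ (w₁ b)) →
      ∀ (T : Fin n → ℝ) (δ : ℝ), 0 ≤ δ →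
        (∀ t : Fin n, (t : ℕ) + 1 < n → δ ≤ T t - T (nxt n t)) →
        ∑ a, projQR n βQ βR
            (fun b => nuC n (cutSet n βP βQ βR w w₁) c ((w₁ * w)⁻¹ b)) a * T a ≤
          -c₁ * δ := by
  refine ⟨c₀, hc₀, ?_⟩
  intro βQ βR hmQ hmR hQR w w₁ hw hw₁L hw₁ c hc hne T δ hδ hT
  have hgap := gapT n T δ hδ hT
  set w' : Equiv.Perm (Fin n) := w₁ * w with hw'
  set C : Finset (Fin n) := cutSet n βP βQ βR w w₁ with hC
  set S : Fin n → ℝ := projQR n βQ βR T with hS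
  set H : Fin n → ℝ := fun b => nuC n C c (w'⁻¹ b) with hH
  -- Step 1: self-adjointness
  have e1 : ∑ a, projQR n βQ βR H a * T a = ∑ a, H a * S a := by
    simp only [projQR, sub_mul, mul_sub, hS]
    rw [Finset.sum_sub_distrib, Finset.sum_sub_distrib, meanB_adj, meanB_adj]
  -- Step 2: reindex by w'
  have e2 : ∑ a, H a * S a = ∑ a, nuC n C c a * S (w' a) := by
    rw [← Equiv.sum_comp w' (fun a => H a * S a)]
    refine Finset.sum_congr rfl fun a _ => ?_
    simp [hH]
  -- Step 3: expand ν
  have e3 : ∑ a, nuC n C c a * S (w' a)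
      = ∑ t ∈ C, c t * (S (w' t) - S (w' (nxt n t))) := by
    unfold nuC
    simp only [Finset.sum_mul]
    rw [Finset.sum_comm]
    refine Finset.sum_congr rfl fun t _ => ?_
    have hsplit : ∀ a : Fin n,
        c t * ((if a = t then (1 : ℝ) else 0) - if a = nxt n t then 1 else 0) * S (w' a)
        = (if a = t then c t * S (w' a) else 0)
          - (if a = nxt n t then c t * S (w' a) else 0) := by
      intro a
      split_ifs <;> ring
    rw [Finset.sum_congr rfl fun a _ => hsplit a, Finset.sum_sub_distrib,
      Finset.sum_ite_eq' univ t, Finset.sum_ite_eq' univ (nxt n t)]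
    simp [mul_sub]
  -- Step 4: each term is at most -c₀δ
  have key : ∀ t ∈ C, c t * (S (w' t) - S (w' (nxt n t))) ≤ -c₀ * δ := by
    intro t htC
    obtain ⟨-, ht1, ⟨hPt, hRt⟩, hnot⟩ := Finset.mem_filter.mp htC
    have hnt : (nxt n t : ℕ) = (t : ℕ) + 1 := by simp [nxt, ht1]
    have htlt : t < nxt n t := by rw [Fin.lt_def, hnt]; omega
    have hQne : βQ (w' t) ≠ βQ (w' (nxt n t)) := fun h => hnot ⟨hPt, h⟩
    have hwlt : w t < w (nxt n t) := hw.1 t (nxt n t) htlt hPt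
    have hw'lt : w' t < w' (nxt n t) := by
      simp only [hw', Equiv.Perm.mul_apply]
      exact hw₁.1 (w t) (w (nxt n t)) hwlt ⟨hRt, by simpa using hPt⟩
    have hRw' : βR (w' t) = βR (w' (nxt n t)) := by
      simp only [hw', Equiv.Perm.mul_apply, hw₁L]
      exact hRt
    have hQlt : βQ (w' t) < βQ (w' (nxt n t)) :=
      lt_of_le_of_ne (hmQ (le_of_lt hw'lt)) hQne
    have hmean := mean_gap n βQ hmQ T δ hgap hQlt
    have hmR' := meanB_congr n βR T hRw'
    have hD : δ ≤ S (w' t) - S (w' (nxt n t)) := by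
      simp only [hS, projQR]
      linarith
    have hct := hc t htC
    nlinarith [hD, hct, hδ, hc₀]
  -- Step 5: the cut set is nonempty
  have hnonempty : C.Nonempty := by
    push_neg at hne
    obtain ⟨a, b, ⟨hRab, hPab⟩, hQab⟩ := hne
    have main : ∀ x y : Fin n, x < y → βP x = βP y → βR (w x) = βR (w y) →
        βQ (w' x) ≠ βQ (w' y) → C.Nonempty := by
      intro x y hxy hPxy hRxy hQxy
      obtain ⟨t, ht1, ht2, ht3, ht4⟩ := exists_cut_s11 n (fun s => βQ (w' s)) x y hxy hQxy
      have hnt : (nxt n t : ℕ) = (t : ℕ) + 1 := by simp [nxt, ht2]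
      -- monotonicity of w on [x,y]
      have hwm : ∀ s s' : Fin n, (x : ℕ) ≤ (s : ℕ) → (s : ℕ) ≤ (s' : ℕ) →
          (s' : ℕ) ≤ (y : ℕ) → w s ≤ w s' := by
        intro s s' h1 h2 h3
        rcases eq_or_lt_of_le h2 with h | h
        · rw [Fin.ext h]
        · refine le_of_lt (hw.1 s s' (Fin.lt_def.mpr h) ?_)
          have l1 : βP x ≤ βP s := hmP (Fin.le_def.mpr h1)
          have l2 : βP s ≤ βP s' := hmP (Fin.le_def.mpr h2)
          have l3 : βP s' ≤ βP y := hmP (Fin.le_def.mpr h3)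
          omega
      have hty : (t : ℕ) ≤ (y : ℕ) := by omega
      have hPt : βP t = βP (nxt n t) := by
        have l1 : βP x ≤ βP t := hmP (Fin.le_def.mpr ht1)
        have l2 : βP t ≤ βP (nxt n t) := hmP (Fin.le_def.mpr (by omega))
        have l3 : βP (nxt n t) ≤ βP y := hmP (Fin.le_def.mpr (by omega))
        omega
      have hRwt : βR (w t) = βR (w (nxt n t)) := by
        have l1 : βR (w x) ≤ βR (w t) := hmR (hwm x t le_rfl ht1 hty)
        have l2 : βR (w t) ≤ βR (w (nxt n t)) := hmR (hwm t (nxt n t) ht1 (by omega) (by omega))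
        have l3 : βR (w (nxt n t)) ≤ βR (w y) := hmR (hwm (nxt n t) y (by omega) (by omega) le_rfl)
        omega
      refine ⟨t, ?_⟩
      rw [hC, cutSet, Finset.mem_filter]
      exact ⟨Finset.mem_univ t, ht2, ⟨hPt, hRwt⟩, fun h => ht4 h.2⟩
    have hxy : w⁻¹ a ≠ w⁻¹ b := by
      intro h
      apply hQab
      have : a = b := by
        have := congrArg w h; simpa using this
      rw [this]
    have hP' : βP (w⁻¹ a) = βP (w⁻¹ b) := hPab
    have hR' : βR (w (w⁻¹ a)) = βR (w (w⁻¹ b)) := by simpa using hRab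
    have hQ' : βQ (w' (w⁻¹ a)) ≠ βQ (w' (w⁻¹ b)) := by
      simpa [hw', Equiv.Perm.mul_apply] using hQab
    rcases lt_or_gt_of_ne hxy with h | h
    · exact main (w⁻¹ a) (w⁻¹ b) h hP' hR' hQ'
    · exact main (w⁻¹ b) (w⁻¹ a) h hP'.symm hR'.symm (Ne.symm hQ')
  -- Step 6: conclude
  calc ∑ a, projQR n βQ βR H a * T a
      = ∑ t ∈ C, c t * (S (w' t) - S (w' (nxt n t))) := by rw [e1, e2, e3]
    _ ≤ ∑ _t ∈ C, (-c₀ * δ) := Finset.sum_le_sum key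
    _ = (C.card : ℝ) * (-c₀ * δ) := by rw [Finset.sum_const, nsmul_eq_mul]
    _ ≤ -c₀ * δ := by
        have h1 : 1 ≤ (C.card : ℝ) := by
          exact_mod_cast Finset.one_le_card.mpr hnonempty
        nlinarith [mul_nonneg (by linarith : (0:ℝ) ≤ (C.card : ℝ) - 1)
          (mul_nonneg hc₀.le hδ)]
end
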